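/- arXiv:2410.06808 — 8 statements merged into one kernel-verified Lean document; each statement's English description precedes it below -/
import Mathlib

section
/- Let P be a string of length m and T a string of length n with n ≤ 2m+1. If P occurs both as a prefix and as a suffix of T (i.e., 0 and n−m both lie in Occ(P,T)), then g = gcd(Occ(P,T)) is a period of T, meaning T[i] = T[i+g] for all i ∈ [0, n−g). -/
section
variable {α : Type*}

def SPer (w : ℕ → α) (L p : ℕ) : Prop := ∀ t, t + p < L → w t = w (t + p)

lemma sper_chain {w : ℕ → α} {L g : ℕ} (h : SPer w L g) :
    ∀ k a, a + k * g < L → w a = w (a + k * g) := by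
  intro k
  induction k with
  | zero => intro a _; simp
  | succ k IH =>
    intro a ha
    have e : a + (k + 1) * g = a + k * g + g := by ring
    rw [e] at ha ⊢
    exact (IH a (by omega)).trans (h (a + k * g) ha)

lemma sper_modEq {w : ℕ → α} {L g : ℕ} (h : SPer w L g) {a b : ℕ}
    (ha : a < L) (hb : b < L) (hab : a ≡ b [MOD g]) : w a = w b := by
  rcases le_total a b with hle | hle
  · obtain ⟨k, hk⟩ := (Nat.modEq_iff_dvd' hle).mp hab
    rw [Nat.mul_comm] at hk
    have hb' : b = a + k * g := by omega
    rw [hb']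
    exact sper_chain h k a (by omega)
  · obtain ⟨k, hk⟩ := (Nat.modEq_iff_dvd' hle).mp hab.symm
    rw [Nat.mul_comm] at hk
    have ha' : a = b + k * g := by omega
    rw [ha']
    exact (sper_chain h k b (by omega)).symm

lemma sper_fw (w : ℕ → α) :
    ∀ q p L, 0 < p → p ≤ q → p + q ≤ L + Nat.gcd p q →
      SPer w L p → SPer w L q → SPer w L (Nat.gcd p q) := by
  intro q
  induction q using Nat.strong_induction_on with
  | _ q IH =>
  intro p L hp hpq hsum hPp hPq
  rcases eq_or_lt_of_le hpq with rfl | hlt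
  · simpa [Nat.gcd_self] using hPp
  have hgp : Nat.gcd p q ∣ p := Nat.gcd_dvd_left p q
  have hgq : Nat.gcd p q ∣ q := Nat.gcd_dvd_right p q
  have hgpos : 0 < Nat.gcd p q := Nat.gcd_pos_of_pos_left q hp
  have hgle : Nat.gcd p q ≤ p := Nat.le_of_dvd hp hgp
  have hqp : Nat.gcd p q ∣ q - p := Nat.dvd_sub hgq hgp
  have hqpg : Nat.gcd p q ≤ q - p := Nat.le_of_dvd (by omega) hqp
  have hL : 2 * p ≤ L := by omega
  have hgsub : Nat.gcd p (q - p) = Nat.gcd p q := by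
    apply Nat.dvd_antisymm
    · refine Nat.dvd_gcd (Nat.gcd_dvd_left _ _) ?_
      have h3 : Nat.gcd p (q - p) ∣ (q - p) + p :=
        Nat.dvd_add (Nat.gcd_dvd_right _ _) (Nat.gcd_dvd_left _ _)
      rwa [show q - p + p = q from by omega] at h3
    · exact Nat.dvd_gcd hgp hqp
  have hApre : SPer w (L - p) p := fun t ht => hPp t (by omega)
  have hBpre : SPer w (L - p) (q - p) := by
    intro t ht
    have h1 : t + q < L := by omega
    have h2 := hPq t h1
    have h3 := hPp (t + (q - p)) (by omega)
    rw [show t + (q - p) + p = t + q from by omega] at h3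
    exact h2.trans h3.symm
  have hrec : SPer w (L - p) (Nat.gcd p q) := by
    rcases le_total p (q - p) with hle | hle
    · have h := IH (q - p) (by omega) p (L - p) hp hle (by rw [hgsub]; omega) hApre hBpre
      rwa [hgsub] at h
    · have h := IH p (by omega) (q - p) (L - p) (by omega) hle
        (by rw [Nat.gcd_comm, hgsub]; omega) hBpre hApre
      rwa [Nat.gcd_comm, hgsub] at h
  intro t
  induction t using Nat.strong_induction_on with
  | _ t IHt =>
  intro ht
  by_cases hcase : t + Nat.gcd p q < L - p
  · exact hrec t hcase
  · have h1 : p ≤ t + Nat.gcd p q := by omega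
    have e2 := hPp (t + Nat.gcd p q - p) (by omega)
    rw [show t + Nat.gcd p q - p + p = t + Nat.gcd p q from by omega] at e2
    by_cases htp : p ≤ t
    · have e1 := hPp (t - p) (by omega)
      rw [show t - p + p = t from by omega] at e1
      have e3 := IHt (t - p) (by omega) (by omega)
      rw [show t - p + Nat.gcd p q = t + Nat.gcd p q - p from by omega] at e3
      exact e1.symm.trans (e3.trans e2)
    · have hlt2 : t < L - p := by omega
      have e3 : w (t + Nat.gcd p q - p) = w t := by
        apply sper_modEq hrec (by omega) hlt2
        have hd : Nat.gcd p q ∣ t - (t + Nat.gcd p q - p) := by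
          rw [show t - (t + Nat.gcd p q - p) = p - Nat.gcd p q from by omega]
          exact Nat.dvd_sub hgp dvd_rfl
        exact (Nat.modEq_iff_dvd' (by omega)).mpr hd
      exact e3.symm.trans e2

lemma sper_fw' {w : ℕ → α} {p q L : ℕ} (hp : 0 < p) (hq : 0 < q)
    (hsum : p + q ≤ L + Nat.gcd p q) (h1 : SPer w L p) (h2 : SPer w L q) :
    SPer w L (Nat.gcd p q) := by
  rcases le_total p q with h | h
  · exact sper_fw w q p L hp h hsum h1 h2
  · have h3 := sper_fw w p q L hq h (by rw [Nat.gcd_comm]; omega) h2 h1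
    rwa [Nat.gcd_comm] at h3

end

/-- Let `P` be a string of length `m` and `T` a string of length `n`
with `n ≤ 2m + 1`.  If `P` occurs both as a prefix and as a suffix of `T`
(i.e. `0` and `n − m` both lie in `Occ(P,T)`), then `g = gcd(Occ(P,T))` is a
period of `T`: `T[i] = T[i+g]` for all `i ∈ [0, n−g)`. -/
theorem gcd_occ_is_period {α : Type*} [DecidableEq α] (m n : ℕ) (hm : 0 < m)
    (hmn : m ≤ n) (hn : n ≤ 2 * m + 1) (P T : ℕ → α) :
    ∀ Occ : Finset ℕ,
      Occ = (Finset.range (n - m + 1)).filter (fun i => ∀ j < m, P j = T (i + j)) →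
      0 ∈ Occ → n - m ∈ Occ →
      ∀ i, i + Occ.gcd id < n → T i = T (i + Occ.gcd id) := by
  intro Occ hOcc h0 hD i hi
  classical
  set D := n - m with hDdef
  set g := Occ.gcd id with hgdef
  have hmem : ∀ j, j ∈ Occ ↔ j ≤ D ∧ ∀ t < m, P t = T (j + t) := by
    intro j
    rw [hOcc]
    simp [Finset.mem_filter, Finset.mem_range, Nat.lt_succ_iff]
  have hP0 : ∀ t, t < m → P t = T t := by
    intro t ht
    have h1 := ((hmem 0).mp h0).2 t ht
    simpa using h1
  have hPD : ∀ t, t < m → P t = T (D + t) := fun t ht => ((hmem D).mp hD).2 t ht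
  have hgdvd : ∀ j ∈ Occ, g ∣ j := fun j hj => Finset.gcd_dvd hj
  by_cases hg0 : g = 0
  · rw [hg0]; simp
  have hgpos : 0 < g := Nat.pos_of_ne_zero hg0
  have hgD : g ∣ D := hgdvd D hD
  have hDpos : 0 < D := by
    rcases Nat.eq_zero_or_pos D with h | h
    · exfalso
      apply hg0
      rw [hgdef, Finset.gcd_eq_zero_iff]
      intro j hj
      have := ((hmem j).mp hj).1
      simp only [id]
      omega
    · exact h
  have hn2 : n = m + D := by omega
  have hDle : D ≤ m + 1 := by omega
  have per1 : ∀ j ∈ Occ, SPer P m j := by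
    intro j hj t ht
    have h1 := ((hmem j).mp hj).2 t (by omega)
    have h2 := hP0 (t + j) ht
    rw [h1, h2, Nat.add_comm j t]
  have per2 : ∀ j ∈ Occ, SPer P m (D - j) := by
    intro j hj t ht
    have hjD : j ≤ D := ((hmem j).mp hj).1
    have h1 := hPD t (by omega)
    have h2 := ((hmem j).mp hj).2 (t + (D - j)) ht
    rw [show j + (t + (D - j)) = D + t from by omega] at h2
    exact h1.trans h2.symm
  have perD : SPer P m D := by simpa using per2 0 h0
  have perG : ∀ j ∈ Occ, SPer P m (Nat.gcd j D) := by
    intro j hj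
    have hjD : j ≤ D := ((hmem j).mp hj).1
    rcases Nat.eq_zero_or_pos j with rfl | hjpos
    · simpa [Nat.gcd_zero_left] using perD
    by_cases hjD2 : j = D
    · rw [hjD2, Nat.gcd_self]; exact perD
    have hgsub : Nat.gcd j (D - j) = Nat.gcd j D := by
      apply Nat.dvd_antisymm
      · refine Nat.dvd_gcd (Nat.gcd_dvd_left _ _) ?_
        have h3 : Nat.gcd j (D - j) ∣ (D - j) + j :=
          Nat.dvd_add (Nat.gcd_dvd_right _ _) (Nat.gcd_dvd_left _ _)
        rwa [show D - j + j = D from by omega] at h3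
      · exact Nat.dvd_gcd (Nat.gcd_dvd_left _ _)
          (Nat.dvd_sub (Nat.gcd_dvd_right _ _) (Nat.gcd_dvd_left _ _))
    rw [← hgsub]
    apply sper_fw' hjpos (by omega) ?_ (per1 j hj) (per2 j hj)
    have hpos : 0 < Nat.gcd j (D - j) := Nat.gcd_pos_of_pos_left _ hjpos
    omega
  have hcomb : ∀ a b : ℕ, SPer P m a → a ∣ D → 0 < a → SPer P m b → b ∣ D → 0 < b →
      SPer P m (Nat.gcd a b) ∧ Nat.gcd a b ∣ D ∧ 0 < Nat.gcd a b := by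
    intro a b hPa haD hapos hPb hbD hbpos
    refine ⟨?_, (Nat.gcd_dvd_left a b).trans haD, Nat.gcd_pos_of_pos_left _ hapos⟩
    by_cases haeq : a = D
    · have he : Nat.gcd a b = b := by
        rw [haeq]
        exact Nat.dvd_antisymm (Nat.gcd_dvd_right _ _) (Nat.dvd_gcd hbD dvd_rfl)
      rw [he]; exact hPb
    by_cases hbeq : b = D
    · have he : Nat.gcd a b = a := by
        rw [hbeq]
        exact Nat.dvd_antisymm (Nat.gcd_dvd_left _ _) (Nat.dvd_gcd dvd_rfl haD)
      rw [he]; exact hPa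
    have h2a : 2 * a ≤ D := by
      obtain ⟨k, hk⟩ := haD
      have h2 : 2 ≤ k := by
        rcases k with _ | _ | k
        · simp at hk; omega
        · simp at hk; omega
        · omega
      calc 2 * a ≤ k * a := Nat.mul_le_mul_right a h2
        _ = D := by rw [hk, Nat.mul_comm]
    have h2b : 2 * b ≤ D := by
      obtain ⟨k, hk⟩ := hbD
      have h2 : 2 ≤ k := by
        rcases k with _ | _ | k
        · simp at hk; omega
        · simp at hk; omega
        · omega
      calc 2 * b ≤ k * b := Nat.mul_le_mul_right b h2
        _ = D := by rw [hk, Nat.mul_comm]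
    apply sper_fw' hapos hbpos ?_ hPa hPb
    have hpos : 0 < Nat.gcd a b := Nat.gcd_pos_of_pos_left _ hapos
    omega
  have hGG : ∀ x y : ℕ, GCDMonoid.gcd x y = Nat.gcd x y := fun _ _ => rfl
  have hfold : ∀ S : Finset ℕ, S ⊆ Occ → S.Nonempty →
      SPer P m (S.gcd fun j => Nat.gcd j D) ∧ (S.gcd fun j => Nat.gcd j D) ∣ D ∧
        0 < S.gcd fun j => Nat.gcd j D := by
    intro S
    induction S using Finset.induction_on with
    | empty => intro _ h; exact absurd h Finset.not_nonempty_empty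
    | @insert a S ha IH =>
      intro hsub hne
      have haI : SPer P m (Nat.gcd a D) ∧ Nat.gcd a D ∣ D ∧ 0 < Nat.gcd a D :=
        ⟨perG a (hsub (Finset.mem_insert_self a S)), Nat.gcd_dvd_right _ _,
          Nat.gcd_pos_of_pos_right _ hDpos⟩
      rw [Finset.gcd_insert, hGG]
      rcases S.eq_empty_or_nonempty with rfl | hSne
      · simpa using haI
      · have hI := IH (fun x hx => hsub (Finset.mem_insert_of_mem hx)) hSne
        exact hcomb _ _ haI.1 haI.2.1 haI.2.2 hI.1 hI.2.1 hI.2.2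
  have hXY : Occ.gcd (fun j => Nat.gcd j D) = g := by
    apply Nat.dvd_antisymm
    · rw [hgdef]
      apply Finset.dvd_gcd
      intro j hj
      exact (Finset.gcd_dvd hj).trans (Nat.gcd_dvd_left _ _)
    · apply Finset.dvd_gcd
      intro j hj
      exact Nat.dvd_gcd (hgdvd j hj) hgD
  have hPer_g : SPer P m g := by
    have h := (hfold Occ (Finset.Subset.refl _) ⟨0, h0⟩).1
    rwa [hXY] at h
  have hInterior : g < D → ∃ j ∈ Occ, 0 < j ∧ j < D := by
    intro hgD2
    by_contra hno
    push_neg at hno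
    have hdd : D ∣ g := by
      rw [hgdef]
      apply Finset.dvd_gcd
      intro j hj
      have h1 := ((hmem j).mp hj).1
      rcases Nat.eq_zero_or_pos j with rfl | hjpos
      · simp
      · have h2 := hno j hj hjpos
        have h3 : j = D := by omega
        simp only [id, h3]
        exact dvd_rfl
    have := Nat.le_of_dvd hgpos hdd
    omega
  have hcover : ∀ x, x < n → (x = m → m < D → g < D) →
      ∃ j ∈ Occ, ∃ t, t < m ∧ x = j + t := by
    intro x hx hcond
    by_cases h1 : x < m
    · exact ⟨0, h0, x, h1, by omega⟩
    by_cases h2 : D ≤ x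
    · exact ⟨D, hD, x - D, by omega, by omega⟩
    · have hxm : x = m := by omega
      have hgDlt : g < D := hcond hxm (by omega)
      obtain ⟨j, hj, hj0, hjD⟩ := hInterior hgDlt
      have hjm : j ≤ m := by omega
      exact ⟨j, hj, x - j, by omega, by omega⟩
  obtain ⟨j1, hj1, t1, ht1, he1⟩ := hcover i (by omega) (fun hx _ => by omega)
  obtain ⟨j2, hj2, t2, ht2, he2⟩ := hcover (i + g) hi (fun hx hmD => by omega)
  have hd1 : g ∣ j1 := hgdvd j1 hj1
  have hd2 : g ∣ j2 := hgdvd j2 hj2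
  have hT1 : T i = P t1 := by
    rw [he1]; exact (((hmem j1).mp hj1).2 t1 ht1).symm
  have hT2 : T (i + g) = P t2 := by
    rw [he2]; exact (((hmem j2).mp hj2).2 t2 ht2).symm
  rw [hT1, hT2]
  apply sper_modEq hPer_g ht1 ht2
  have e1 : i ≡ t1 [MOD g] := by
    rw [he1]
    have h := Nat.ModEq.add_right t1 ((Nat.modEq_zero_iff_dvd).mpr hd1)
    simpa using h
  have e2 : i + g ≡ t2 [MOD g] := by
    rw [he2]
    have h := Nat.ModEq.add_right t2 ((Nat.modEq_zero_iff_dvd).mpr hd2)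
    simpa using h
  have e3 : i ≡ i + g [MOD g] := (Nat.add_mod_right i g).symm
  exact e1.symm.trans (e3.trans e2)
end

section
/- Let m ≤ n ≤ 2m be positive integers, S ⊆ [0, n−m] with {0, n−m} ⊆ S, and let strings P (length m) and T (length n) satisfy S ⊆ Occ(P,T) (every s ∈ S is an exact occurrence position of P in T). Then g = gcd(S) is a period of T, and in particular T (and hence P = T[0..m)) uses at most g distinct characters in the sense that T[i] = T[j] whenever i ≡ j (mod g). -/
/-- Let `m ≤ n ≤ 2m` be positive, `S ⊆ [0, n−m]` with
`{0, n−m} ⊆ S`, and let strings `P` (length `m`) and `T` (length `n`) satisfy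
`S ⊆ Occ(P,T)`.  Then `g = gcd S` is a period of `T`, and `T` uses at most `g`
distinct characters in the sense that `T[i] = T[j]` whenever `i ≡ j (mod g)`. -/
theorem gcd_of_occurrence_subset_is_period {α : Type*} (m n : ℕ) (hm : 0 < m)
    (hmn : m ≤ n) (hn : n ≤ 2 * m) (S : Finset ℕ)
    (hSsub : ∀ s ∈ S, s ≤ n - m) (h0 : 0 ∈ S) (hnm : n - m ∈ S)
    (P T : ℕ → α) (hocc : ∀ s ∈ S, ∀ j < m, P j = T (s + j)) :
    (∀ i, i + S.gcd id < n → T i = T (i + S.gcd id)) ∧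
      (∀ i j, i < n → j < n → i % S.gcd id = j % S.gcd id → T i = T j) := by
  set g := S.gcd id with hg
  have key : ∀ i j, i < n → j < n → i % g = j % g → T i = T j := by
    intro i j hi hj hij
    rcases Nat.eq_zero_or_pos g with hg0 | hgpos
    · rw [hg0, Nat.mod_zero, Nat.mod_zero] at hij
      subst hij; rfl
    · set d := n - m with hd
      have hdm : d ≤ m := by omega
      have hdvd : ∀ s ∈ S, g ∣ s := fun s hs => Finset.gcd_dvd hs
      have hdpos : 0 < d := by
        by_contra h
        have hall : ∀ s ∈ S, s = 0 := by
          intro s hs; have := hSsub s hs; omega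
        have : g = 0 := Finset.gcd_eq_zero_iff.mpr (by intro s hs; simpa using hall s hs)
        omega
      have hnd : n = m + d := by omega
      -- d is a (full) period of T
      have lemA : ∀ k, k + d < n → T k = T (k + d) := by
        intro k hk
        have hkm : k < m := by omega
        have h1 : P k = T k := by simpa using hocc 0 h0 k hkm
        have h2 : P k = T (d + k) := hocc d hnm k hkm
        rw [← h1, h2, Nat.add_comm]
      have lemB : ∀ k, k < n → T k = T (k % d) := by
        intro k
        induction k using Nat.strong_induction_on with
        | _ k ih =>
          intro hk
          rcases lt_or_ge k d with h | h
          · rw [Nat.mod_eq_of_lt h]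
          · have e1 : T (k - d) = T k := by
              have := lemA (k - d) (by omega)
              rw [this]; congr 1; omega
            rw [← e1, ih (k - d) (by omega) (by omega)]
            congr 1
            conv_rhs => rw [← Nat.sub_add_cancel h]
            rw [Nat.add_mod_right]
      have lemC : ∀ s ∈ S, ∀ x, x < d → T x = T ((x + s) % d) := by
        intro s hs x hx
        have hsd : s ≤ d := hSsub s hs
        have hxm : x < m := by omega
        have h1 : P x = T x := by simpa using hocc 0 h0 x hxm
        have h2 : P x = T (s + x) := hocc s hs x hxm
        rw [← h1, h2, lemB (s + x) (by omega), Nat.add_comm s x]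
      haveI : NeZero d := ⟨hdpos.ne'⟩
      set f : ZMod d → α := fun x => T x.val with hf
      set Invp : ZMod d → Prop := fun h => ∀ x : ZMod d, f (x + h) = f x with hInvp
      have InvGen : ∀ s ∈ S, Invp ((s : ℕ) : ZMod d) := by
        intro s hs x
        have hxv : x.val < d := ZMod.val_lt x
        have hc := lemC s hs x.val hxv
        simp only [hf]
        rw [ZMod.val_add, ZMod.val_natCast, Nat.add_mod_mod]
        exact hc.symm
      have InvZero : Invp 0 := by intro x; rw [add_zero]
      have InvAdd : ∀ a b, Invp a → Invp b → Invp (a + b) := by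
        intro a b ha hb x
        rw [← add_assoc, hb, ha]
      have InvNeg : ∀ a, Invp a → Invp (-a) := by
        intro a ha x
        have := ha (x + -a)
        rw [neg_add_cancel_right] at this
        exact this.symm
      have InvZsmul : ∀ a, Invp a → ∀ z : ℤ, Invp (z • a) := by
        intro a ha z
        induction z using Int.induction_on with
        | zero => simpa using InvZero
        | succ k ihk =>
          have : ((k : ℤ) + 1) • a = (k : ℤ) • a + a := by rw [add_smul, one_smul]
          rw [this]; exact InvAdd _ _ ihk ha
        | pred k ihk =>
          have : (-(k : ℤ) - 1) • a = (-(k:ℤ)) • a + (-a) := by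
            rw [sub_smul, one_smul, sub_eq_add_neg]
          rw [this]; exact InvAdd _ _ ihk (InvNeg _ ha)
      have InvGcd : ∀ (S' : Finset ℕ), (∀ s ∈ S', Invp ((s : ℕ) : ZMod d)) →
          Invp ((S'.gcd id : ℕ) : ZMod d) := by
        classical
        intro S'
        induction S' using Finset.induction_on with
        | empty => intro _; simpa using InvZero
        | insert _ _ hnotmem ih =>
          rename_i a s'
          intro hall
          rw [Finset.gcd_insert]
          have ha : Invp ((a : ℕ) : ZMod d) := hall a (Finset.mem_insert_self a s')
          have hb : Invp ((s'.gcd id : ℕ) : ZMod d) :=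
            ih (fun s hs => hall s (Finset.mem_insert_of_mem hs))
          set b := s'.gcd id
          have bez : ((Nat.gcd a b : ℕ) : ZMod d)
              = Nat.gcdA a b • ((a : ℕ) : ZMod d) + Nat.gcdB a b • ((b : ℕ) : ZMod d) := by
            have h := Nat.gcd_eq_gcd_ab a b
            have h2 := congrArg (fun z : ℤ => (z : ZMod d)) h
            push_cast at h2
            rw [zsmul_eq_mul, zsmul_eq_mul]
            simpa [mul_comm] using h2
          show Invp ((Nat.gcd a b : ℕ) : ZMod d)
          rw [bez]
          exact InvAdd _ _ (InvZsmul _ ha _) (InvZsmul _ hb _)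
      have InvG : Invp ((g : ℕ) : ZMod d) := InvGcd S InvGen
      have lemD : ∀ a b : ℕ, a < d → b < d → a ≤ b → a % g = b % g → T a = T b := by
        intro a b ha hb hab hmod
        have hdv : g ∣ b - a := (Nat.modEq_iff_dvd' hab).mp hmod
        obtain ⟨k, hk⟩ := hdv
        have hcast : ((b : ℕ) : ZMod d) = ((a : ℕ) : ZMod d) + (k : ℤ) • ((g : ℕ) : ZMod d) := by
          have : b = a + g * k := by omega
          rw [this]
          push_cast
          rw [zsmul_eq_mul]
          push_cast
          ring
        have := InvZsmul _ InvG (k : ℤ) ((a : ℕ) : ZMod d)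
        rw [← hcast] at this
        have hfa : f ((a : ℕ) : ZMod d) = T a := by
          simp only [hf]; rw [ZMod.val_natCast, Nat.mod_eq_of_lt ha]
        have hfb : f ((b : ℕ) : ZMod d) = T b := by
          simp only [hf]; rw [ZMod.val_natCast, Nat.mod_eq_of_lt hb]
        rw [hfa, hfb] at this
        exact this.symm
      have hgd : g ∣ d := hdvd _ hnm
      have e1 : T i = T (i % d) := lemB i hi
      have e2 : T j = T (j % d) := lemB j hj
      have hmm : (i % d) % g = (j % d) % g := by
        rw [Nat.mod_mod_of_dvd i hgd, Nat.mod_mod_of_dvd j hgd]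
        exact hij
      have hid : i % d < d := Nat.mod_lt _ hdpos
      have hjd : j % d < d := Nat.mod_lt _ hdpos
      rcases le_total (i % d) (j % d) with h | h
      · rw [e1, e2]; exact lemD _ _ hid hjd h hmm
      · rw [e1, e2]; exact (lemD _ _ hjd hid h hmm.symm).symm
  refine ⟨?_, key⟩
  intro i hi
  exact key i (i + g) (by omega) hi (Nat.add_mod_right i g).symm
end

section
/- Let P be a string of length m, T a string of length n, d a positive integer, and Q a primitive string with |Q| ≤ m/(8d). Suppose δ_H(P, Q*) ≤ d and δ_H(T, rot^a(Q)*) ≤ 4d for some a ∈ [0,|Q|). Then the set of 5d-mismatch occurrences of P in T equals {a + b·|Q| : b ∈ ℤ} ∩ [0, n−m], i.e., Occ^H_{5d}(P,T) is exactly the arithmetic progression of positions congruent to a modulo |Q| within [0, n−m]. -/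
/-- `Q` (a string of length `q`, modeled as `Q : ℕ → α` restricted to `[0,q)`)
is primitive: it is not a proper power, equivalently it has no period `p < q`
dividing `q`. -/
def PrimitiveFun {α : Type*} (Q : ℕ → α) (q : ℕ) : Prop :=
  ¬ ∃ p, 0 < p ∧ p < q ∧ p ∣ q ∧ ∀ i, i + p < q → Q i = Q (i + p)

open Classical in
lemma rot_mismatch_two {α : Type*} {Q : ℕ → α} {q s : ℕ}
    (hq : 0 < q) (hprim : PrimitiveFun Q q) (hs : 0 < s) (hsq : s < q) :
    2 ≤ ((Finset.range q).filter (fun i => Q i ≠ Q ((i + s) % q))).card := by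
  classical
  by_contra hlt
  push_neg at hlt
  set M := (Finset.range q).filter (fun i => Q i ≠ Q ((i + s) % q)) with hMdef
  interval_cases h : M.card
  · -- card 0 : Q invariant under rotation by s
    have h0 : ∀ i, i < q → Q i = Q ((i + s) % q) := by
      intro i hi
      by_contra hne
      have : i ∈ M := by simp [hMdef, Finset.mem_filter, Finset.mem_range, hi, hne]
      rw [Finset.card_eq_zero.mp h] at this
      exact absurd this (Finset.notMem_empty i)
    have key : ∀ k i, i < q → Q i = Q ((i + k * s) % q) := by
      intro k
      induction k with
      | zero => intro i hi; simp [Nat.mod_eq_of_lt hi]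
      | succ k ih =>
        intro i hi
        have h1 := ih i hi
        have h2 := h0 ((i + k * s) % q) (Nat.mod_lt _ hq)
        rw [h1, h2, Nat.mod_add_mod]
        congr 2
        ring
    obtain ⟨k, hk⟩ : ∃ k : ℕ, (k * s) % q = Nat.gcd s q % q := by
      set A := Nat.gcdA s q with hA
      refine ⟨(A % q).toNat, ?_⟩
      have hq' : (q : ℤ) ≠ 0 := by exact_mod_cast hq.ne'
      have hAnn : ((A % q).toNat : ℤ) = A % q := Int.toNat_of_nonneg (Int.emod_nonneg A hq')
      have hAA : (A % (q:ℤ)) ≡ A [ZMOD (q:ℤ)] := Int.emod_emod_of_dvd A dvd_rfl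
      have h2 : (s : ℤ) * A ≡ (Nat.gcd s q : ℤ) [ZMOD (q:ℤ)] := by
        rw [Nat.gcd_eq_gcd_ab]
        exact Int.modEq_iff_dvd.mpr ⟨Nat.gcdB s q, by ring⟩
      have h3 : (((A % q).toNat : ℤ) * s) ≡ (Nat.gcd s q : ℤ) [ZMOD (q:ℤ)] := by
        calc ((A % q).toNat : ℤ) * s ≡ A * s [ZMOD (q:ℤ)] := by
              rw [hAnn]; exact hAA.mul_right s
          _ = (s : ℤ) * A := by ring
          _ ≡ (Nat.gcd s q : ℤ) [ZMOD (q:ℤ)] := h2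
      have h5 : (((((A % q).toNat * s : ℕ)) % q : ℕ) : ℤ) = (((Nat.gcd s q % q : ℕ)) : ℤ) := by
        push_cast [Int.natCast_mod]
        exact h3
      exact_mod_cast h5
    refine hprim ⟨Nat.gcd s q, Nat.gcd_pos_of_pos_left q hs,
      lt_of_le_of_lt (Nat.gcd_le_left q hs) hsq, Nat.gcd_dvd_right s q, ?_⟩
    intro i hig
    have h1 := key k i (by omega)
    have h2 : (i + k * s) % q = (i + Nat.gcd s q) % q := by
      rw [Nat.add_mod, hk, ← Nat.add_mod]
    rw [h1, h2, Nat.mod_eq_of_lt hig]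
  · -- card 1 : multiset argument
    obtain ⟨i0, hi0⟩ := Finset.card_eq_one.mp h
    have hi0mem : i0 ∈ M := hi0 ▸ Finset.mem_singleton_self i0
    have hi0q : i0 < q := (Finset.mem_range.mp (Finset.mem_filter.mp hi0mem).1)
    have hi0ne : Q i0 ≠ Q ((i0 + s) % q) := (Finset.mem_filter.mp hi0mem).2
    have heq : ∀ j, j < q → j ≠ i0 → Q j = Q ((j + s) % q) := by
      intro j hj hji
      by_contra hne
      have : j ∈ M := by simp [hMdef, Finset.mem_filter, Finset.mem_range, hj, hne]
      rw [hi0] at this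
      exact hji (Finset.mem_singleton.mp this)
    set S1 := (Finset.range q).filter (fun j => Q j = Q i0) with hS1
    set S2 := (Finset.range q).filter (fun j => Q ((j + s) % q) = Q i0) with hS2
    have hmap : ∀ y < q, (((y + (q - s)) % q) + s) % q = y := by
      intro y hy
      rw [Nat.mod_add_mod]
      have : y + (q - s) + s = y + q := by omega
      rw [this, Nat.add_mod_right, Nat.mod_eq_of_lt hy]
    have himg : S2.image (fun j => (j + s) % q) = S1 := by
      ext y
      simp only [hS1, hS2, Finset.mem_image, Finset.mem_filter, Finset.mem_range]
      constructor
      · rintro ⟨j, ⟨hj, hjQ⟩, rfl⟩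
        exact ⟨Nat.mod_lt _ hq, hjQ⟩
      · rintro ⟨hy, hyQ⟩
        exact ⟨(y + (q - s)) % q, ⟨Nat.mod_lt _ hq, by rw [hmap y hy]; exact hyQ⟩, hmap y hy⟩
    have hinj : Set.InjOn (fun j => (j + s) % q) ↑S2 := by
      intro j hj j' hj' hjj
      simp only [hS2, Finset.coe_filter, Set.mem_setOf_eq, Finset.mem_range] at hj hj'
      have h1 : (j + s) % q = (j' + s) % q := hjj
      have h2 : j % q = j' % q := Nat.ModEq.add_right_cancel' s h1
      rwa [Nat.mod_eq_of_lt hj.1, Nat.mod_eq_of_lt hj'.1] at h2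
    have hcard : S1.card = S2.card := by
      rw [← himg, Finset.card_image_of_injOn hinj]
    have herase : S1.erase i0 = S2.erase i0 := by
      ext j
      simp only [hS1, hS2, Finset.mem_erase, Finset.mem_filter, Finset.mem_range]
      constructor
      · rintro ⟨hji, hj, hjQ⟩
        exact ⟨hji, hj, by rw [← heq j hj hji]; exact hjQ⟩
      · rintro ⟨hji, hj, hjQ⟩
        exact ⟨hji, hj, by rw [heq j hj hji]; exact hjQ⟩
    have hi0S1 : i0 ∈ S1 := by simp [hS1, Finset.mem_filter, Finset.mem_range, hi0q]
    have hi0S2 : i0 ∉ S2 := by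
      simp only [hS2, Finset.mem_filter, Finset.mem_range]
      rintro ⟨-, hc⟩
      exact hi0ne hc.symm
    have e1 : (S1.erase i0).card + 1 = S1.card := Finset.card_erase_add_one hi0S1
    have e2 : (S2.erase i0).card = S2.card := by rw [Finset.erase_eq_of_notMem hi0S2]
    rw [herase, e2] at e1
    omega

lemma ncard_eq_filter_card (N : ℕ) (p : ℕ → Prop) [DecidablePred p] :
    Set.ncard {i | i < N ∧ p i} = ((Finset.range N).filter p).card := by
  rw [← Set.ncard_coe_finset]
  congr 1
  ext i
  simp [Finset.mem_filter, Finset.mem_range]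

lemma mod_eq_helper {q a : ℕ} (hq : 0 < q) (ha : a < q) (y : ℕ) :
    (y + q - a) % q = 0 ↔ y % q = a := by
  constructor
  · intro h
    obtain ⟨t, ht⟩ := (Nat.dvd_iff_mod_eq_zero).mpr h
    have ht1 : 1 ≤ t := by
      rcases Nat.eq_zero_or_pos t with h0 | h1
      · rw [h0, Nat.mul_zero] at ht; omega
      · exact h1
    obtain ⟨t', rfl⟩ : ∃ t', t = t' + 1 := ⟨t - 1, by omega⟩
    have hy : y = q * t' + a := by
      rw [Nat.mul_succ] at ht
      set z := q * t' with hz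
      omega
    rw [hy, Nat.mul_add_mod, Nat.mod_eq_of_lt ha]
  · intro h
    obtain ⟨c, hc⟩ : ∃ c, y = q * c + a := ⟨y / q, by
      conv_lhs => rw [← Nat.div_add_mod y q]
      rw [h]⟩
    have h2 : y + q - a = q * (c + 1) := by
      rw [Nat.mul_succ]
      set z := q * c with hz
      omega
    rw [h2, Nat.mul_mod_right]


/-- Let `P` (length `m`), `T` (length `n`), `d > 0`, and `Q`
primitive with `|Q| ≤ m/(8d)`.  If `δ_H(P, Q*) ≤ d` and
`δ_H(T, rot^a(Q)*) ≤ 4d` for some `a ∈ [0,|Q|)`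
(where `rot^a(Q)[i] = Q[(i + q − a) mod q]`), then
`Occ^H_{5d}(P,T) = {a + b·|Q| : b ∈ ℤ} ∩ [0, n−m]`, i.e. the `5d`-mismatch
occurrences are exactly the positions `≡ a (mod |Q|)` in `[0, n−m]`. -/
theorem occurrences_periodic_progression {α : Type*} (m n q d a : ℕ)
    (P T Q : ℕ → α)
    (hm : 0 < m) (hmn : m ≤ n) (hd : 0 < d) (hq : 0 < q)
    (hqm : 8 * d * q ≤ m)
    (hprim : PrimitiveFun Q q) (ha : a < q)
    (hP : Set.ncard {i | i < m ∧ P i ≠ Q (i % q)} ≤ d)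
    (hT : Set.ncard {i | i < n ∧ T i ≠ Q ((i + q - a) % q)} ≤ 4 * d) :
    {x | x ≤ n - m ∧ Set.ncard {j | j < m ∧ P j ≠ T (x + j)} ≤ 5 * d} =
      {x | x ≤ n - m ∧ x % q = a} := by
  classical
  have hPc : ((Finset.range m).filter (fun i => P i ≠ Q (i % q))).card ≤ d := by
    rw [← ncard_eq_filter_card]; exact hP
  have hTc : ((Finset.range n).filter (fun i => T i ≠ Q ((i + q - a) % q))).card ≤ 4 * d := by
    rw [← ncard_eq_filter_card]; exact hT
  ext x
  simp only [Set.mem_setOf_eq]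
  constructor
  · rintro ⟨hx, hcnt⟩
    refine ⟨hx, ?_⟩
    rw [ncard_eq_filter_card] at hcnt
    by_contra hxa
    set s := (x + q - a) % q with hsdef
    have hs0 : 0 < s := by
      rcases Nat.eq_zero_or_pos s with h0 | h1
      · exact absurd ((mod_eq_helper hq ha x).mp h0) hxa
      · exact h1
    have hsq : s < q := Nat.mod_lt _ hq
    have hshift : ∀ j, (x + j + q - a) % q = (j + s) % q := by
      intro j
      have h1 : x + j + q - a = j + (x + q - a) := by omega
      rw [h1, hsdef, Nat.add_mod_mod]
    set A := (Finset.range m).filter (fun i => P i ≠ Q (i % q)) with hA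
    set B := (Finset.range m).filter (fun j => T (x + j) ≠ Q ((j + s) % q)) with hB
    set C := (Finset.range m).filter (fun j => P j ≠ T (x + j)) with hC
    set D := (Finset.range m).filter (fun j => Q (j % q) ≠ Q ((j + s) % q)) with hD
    have hBc : B.card ≤ 4 * d := by
      refine le_trans (Finset.card_le_card_of_injOn (fun j => x + j) ?_ ?_) hTc
      · intro j hj
        simp only [hB, Finset.mem_coe, Finset.mem_filter, Finset.mem_range] at hj
        simp only [Finset.mem_coe, Finset.mem_filter, Finset.mem_range]
        exact ⟨by omega, by rw [hshift j]; exact hj.2⟩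
      · intro j _ j' _ hjj
        simpa using hjj
    have hsub : D ⊆ A ∪ B ∪ C := by
      intro j hj
      simp only [hD, hA, hB, hC, Finset.mem_union, Finset.mem_filter, Finset.mem_range] at hj ⊢
      obtain ⟨hjm, hjne⟩ := hj
      by_contra hcon
      push_neg at hcon
      obtain ⟨⟨h1', h2'⟩, h3'⟩ := hcon
      exact hjne (by rw [← h1' hjm, h3' hjm, h2' hjm])
    have hMcard : 2 ≤ ((Finset.range q).filter (fun i => Q i ≠ Q ((i + s) % q))).card :=
      rot_mismatch_two hq hprim hs0 hsq
    set M := (Finset.range q).filter (fun i => Q i ≠ Q ((i + s) % q)) with hM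
    have h8 : 8 * d ≤ m / q := (Nat.le_div_iff_mul_le hq).mpr hqm
    have hdiv : ∀ (k i : ℕ), i < q → (k * q + i) / q = k := by
      intro k i hi
      rw [Nat.add_comm, Nat.add_mul_div_right _ _ hq, Nat.div_eq_of_lt hi, Nat.zero_add]
    have hdisj : ∀ k ∈ Finset.range (m / q), ∀ k' ∈ Finset.range (m / q), k ≠ k' →
        Disjoint (M.image (fun i => k * q + i)) (M.image (fun i => k' * q + i)) := by
      intro k _ k' _ hkk'
      rw [Finset.disjoint_left]
      rintro y hy hy'
      simp only [Finset.mem_image, hM, Finset.mem_filter, Finset.mem_range] at hy hy'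
      obtain ⟨i, ⟨hi, -⟩, rfl⟩ := hy
      obtain ⟨i', ⟨hi', -⟩, he⟩ := hy'
      have ha1 := hdiv k i hi
      have ha2 := hdiv k' i' hi'
      rw [he] at ha2
      omega
    have hcard_bi : ((Finset.range (m / q)).biUnion (fun k => M.image (fun i => k * q + i))).card
        = (m / q) * M.card := by
      rw [Finset.card_biUnion hdisj]
      rw [Finset.sum_congr rfl (fun k _ =>
        Finset.card_image_of_injective M (add_right_injective (k * q)))]
      rw [Finset.sum_const, smul_eq_mul, Finset.card_range]
    have hbisub : (Finset.range (m / q)).biUnion (fun k => M.image (fun i => k * q + i)) ⊆ D := by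
      intro y hy
      simp only [Finset.mem_biUnion, Finset.mem_image, hM, Finset.mem_filter,
        Finset.mem_range] at hy
      obtain ⟨k, hk, i, ⟨hi, hine⟩, rfl⟩ := hy
      simp only [hD, Finset.mem_filter, Finset.mem_range]
      constructor
      · calc k * q + i < k * q + q := by omega
          _ = (k + 1) * q := by ring
          _ ≤ (m / q) * q := Nat.mul_le_mul (by omega) le_rfl
          _ ≤ m := Nat.div_mul_le_self m q
      · have e1 : (k * q + i) % q = i := by
          rw [Nat.add_comm, Nat.add_mul_mod_self_right, Nat.mod_eq_of_lt hi]
        have e2 : (k * q + i + s) % q = (i + s) % q := by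
          rw [show k * q + i + s = (i + s) + k * q by ring, Nat.add_mul_mod_self_right]
        rw [e1, e2]; exact hine
    have hDcard : 16 * d ≤ D.card := by
      have h1 := Finset.card_le_card hbisub
      rw [hcard_bi] at h1
      calc 16 * d = (8 * d) * 2 := by ring
        _ ≤ (m / q) * M.card := Nat.mul_le_mul h8 hMcard
        _ ≤ D.card := h1
    have htot : D.card ≤ A.card + B.card + C.card :=
      le_trans (Finset.card_le_card hsub) (le_trans (Finset.card_union_le _ _)
        (Nat.add_le_add_right (Finset.card_union_le _ _) _))
    omega
  · rintro ⟨hx, hxa⟩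
    refine ⟨hx, ?_⟩
    rw [ncard_eq_filter_card]
    have hs0 : (x + q - a) % q = 0 := (mod_eq_helper hq ha x).mpr hxa
    have hshift : ∀ j : ℕ, (x + j + q - a) % q = j % q := by
      intro j
      have h1 : x + j + q - a = j + (x + q - a) := by omega
      rw [h1, ← Nat.add_mod_mod, hs0, Nat.add_zero]
    have hsub : (Finset.range m).filter (fun j => P j ≠ T (x + j)) ⊆
        (Finset.range m).filter (fun i => P i ≠ Q (i % q)) ∪
        (Finset.range m).filter (fun j => T (x + j) ≠ Q (j % q)) := by
      intro j hj
      simp only [Finset.mem_union, Finset.mem_filter, Finset.mem_range] at hj ⊢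
      obtain ⟨hjm, hjne⟩ := hj
      by_contra hcon
      push_neg at hcon
      exact hjne (by rw [hcon.1 hjm, hcon.2 hjm])
    have hB0 : ((Finset.range m).filter (fun j => T (x + j) ≠ Q (j % q))).card ≤ 4 * d := by
      refine le_trans (Finset.card_le_card_of_injOn (fun j => x + j) ?_ ?_) hTc
      · intro j hj
        simp only [Finset.mem_coe, Finset.mem_filter, Finset.mem_range] at hj ⊢
        exact ⟨by omega, by rw [hshift j]; exact hj.2⟩
      · intro j _ j' _ hjj
        simpa using hjj
    have := Finset.card_le_card hsub
    have := Finset.card_union_le ((Finset.range m).filter (fun i => P i ≠ Q (i % q)))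
      ((Finset.range m).filter (fun j => T (x + j) ≠ Q (j % q)))
    omega
end

section
/- Let P be a string of length m, T a string of length n ≤ 2m, k > 0 a threshold, and S a set with {0, n−m} ⊆ S ⊆ [0, n−m]. Let g = gcd(S), and define P^#, T^# from P, T by replacing, in every black connected component of the mismatch inference graph 𝐆_S, all characters by a sentinel character unique to that component. Then: (1) for all a ∈ [0,m) and b ∈ [0,n), P^#[a] = T^#[b] implies P[a] = T[b]; and (2) if g divides x ∈ [0, n−m], then the mismatch information coincides: MI(P, T[x..x+m)) = MI(P^#, T^#[x..x+m)); in particular δ_H(P, T[x..x+m)) = δ_H(P^#, T^#[x..x+m)). -/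
/-- Let `P` (length `m`), `T` (length `n ≤ 2m`), `k > 0`, and
`{0, n−m} ⊆ S ⊆ [0, n−m]`, with `g = gcd S`.  Let `𝐆_S` be the mismatch
inference graph (vertices `p_i` for `i < m` and `t_j` for `j < n`, an edge
`{p_i, t_{i+s}}` for each `i < m`, `s ∈ S`; a component is black if all its
edges join matching characters).  Define `P^#, T^#` by replacing, in every
black component, all characters by a sentinel unique to that component (here:
the component itself, injected via `Sum.inr`).  Then:
(1) `P^#[a] = T^#[b]` implies `P[a] = T[b]`; and
(2) if `g ∣ x` with `x ≤ n−m`, then the mismatch information coincides: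
positions of mismatches agree, and at every mismatch the original characters
are preserved (so in particular the Hamming distances agree). -/
theorem s_core_preserves_mismatch_info {α : Type*}
    (m n k : ℕ) (hm : 0 < m) (hk : 0 < k) (hmn : m ≤ n) (hn : n ≤ 2 * m)
    (S : Finset ℕ) (hSsub : ∀ s ∈ S, s ≤ n - m) (h0 : 0 ∈ S) (hnm : n - m ∈ S)
    (P T : ℕ → α)
    (G : SimpleGraph (ℕ ⊕ ℕ))
    (hAdj : ∀ u v, G.Adj u v ↔
      ∃ i j, i < m ∧ j < n ∧ (∃ s ∈ S, j = i + s) ∧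
        ((u = Sum.inl i ∧ v = Sum.inr j) ∨ (u = Sum.inr j ∧ v = Sum.inl i)))
    (Black : G.ConnectedComponent → Prop)
    (hBlack : ∀ C, Black C ↔
      ∀ i j, i < m → j < n → G.Adj (Sum.inl i) (Sum.inr j) →
        G.connectedComponentMk (Sum.inl i) = C → P i = T j)
    (Psharp Tsharp : ℕ → α ⊕ G.ConnectedComponent)
    (hPb : ∀ i < m, Black (G.connectedComponentMk (Sum.inl i)) →
      Psharp i = Sum.inr (G.connectedComponentMk (Sum.inl i)))
    (hPr : ∀ i < m, ¬ Black (G.connectedComponentMk (Sum.inl i)) →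
      Psharp i = Sum.inl (P i))
    (hTb : ∀ j < n, Black (G.connectedComponentMk (Sum.inr j)) →
      Tsharp j = Sum.inr (G.connectedComponentMk (Sum.inr j)))
    (hTr : ∀ j < n, ¬ Black (G.connectedComponentMk (Sum.inr j)) →
      Tsharp j = Sum.inl (T j)) :
    (∀ a < m, ∀ b < n, Psharp a = Tsharp b → P a = T b) ∧
    (∀ x ≤ n - m, S.gcd id ∣ x →
      (∀ j < m,
        (P j = T (x + j) ↔ Psharp j = Tsharp (x + j)) ∧
        (P j ≠ T (x + j) →
          Psharp j = Sum.inl (P j) ∧ Tsharp (x + j) = Sum.inl (T (x + j)))) ∧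
      Set.ncard {j | j < m ∧ P j ≠ T (x + j)} =
        Set.ncard {j | j < m ∧ Psharp j ≠ Tsharp (x + j)}) := by
  classical
  -- abbreviation
  have hdm : n - m ≤ m := by omega
  -- basic adjacency construction
  have hadj' : ∀ i s, i < m → s ∈ S → G.Adj (Sum.inl i) (Sum.inr (i + s)) := by
    intro i s him hs
    rw [hAdj]
    exact ⟨i, i + s, him, by have := hSsub s hs; omega, ⟨s, hs, rfl⟩, Or.inl ⟨rfl, rfl⟩⟩
  -- values are constant on black components
  have edgeVal : ∀ u v, G.Adj u v → Black (G.connectedComponentMk u) →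
      Sum.elim P T u = Sum.elim P T v := by
    intro u v huv hb
    obtain ⟨i, j, him, hjn, hexists, hcase⟩ := (hAdj u v).mp huv
    have hA : G.Adj (Sum.inl i) (Sum.inr j) := by
      rw [hAdj]; exact ⟨i, j, him, hjn, hexists, Or.inl ⟨rfl, rfl⟩⟩
    rcases hcase with ⟨hu, hv⟩ | ⟨hu, hv⟩
    · subst hu; subst hv
      simpa using (hBlack _).mp hb i j him hjn hA rfl
    · subst hu; subst hv
      have hmk : G.connectedComponentMk (Sum.inl i) = G.connectedComponentMk (Sum.inr j) :=
        SimpleGraph.ConnectedComponent.sound hA.reachable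
      have := (hBlack _).mp hb i j him hjn hA hmk
      simpa using this.symm
  have walkVal : ∀ {u v : ℕ ⊕ ℕ}, G.Walk u v → Black (G.connectedComponentMk u) →
      Sum.elim P T u = Sum.elim P T v := by
    intro u v w
    induction w with
    | nil => intro _; rfl
    | cons h p ih =>
      intro hb
      have h2 := SimpleGraph.ConnectedComponent.sound h.reachable
      rw [edgeVal _ _ h hb]
      exact ih (h2 ▸ hb)
  have reachVal : ∀ u v, G.Reachable u v → Black (G.connectedComponentMk u) →
      Sum.elim P T u = Sum.elim P T v := by
    intro u v h hb
    obtain ⟨w⟩ := h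
    exact walkVal w hb
  -- Part 1
  have part1 : ∀ a < m, ∀ b < n, Psharp a = Tsharp b → P a = T b := by
    intro a ham b hbn heq
    by_cases hba : Black (G.connectedComponentMk (Sum.inl a)) <;>
      by_cases hbb : Black (G.connectedComponentMk (Sum.inr b))
    · rw [hPb a ham hba, hTb b hbn hbb] at heq
      have hC : G.connectedComponentMk (Sum.inl a) = G.connectedComponentMk (Sum.inr b) :=
        Sum.inr.inj heq
      have hr := SimpleGraph.ConnectedComponent.exact hC
      simpa using reachVal _ _ hr hba
    · rw [hPb a ham hba, hTr b hbn hbb] at heq; exact absurd heq (by simp)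
    · rw [hPr a ham hba, hTb b hbn hbb] at heq; exact absurd heq (by simp)
    · rw [hPr a ham hba, hTr b hbn hbb] at heq; exact Sum.inl.inj heq
  -- reachability: step down by n - m
  have stepDown : ∀ c, n - m ≤ c → c < m → G.Reachable (Sum.inl (c - (n - m))) (Sum.inl c) := by
    intro c h1 h2
    have e1 : G.Adj (Sum.inl (c - (n - m))) (Sum.inr c) := by
      have := hadj' (c - (n - m)) (n - m) (by omega) hnm
      rwa [Nat.sub_add_cancel h1] at this
    have e2 : G.Adj (Sum.inl c) (Sum.inr c) := by
      simpa using hadj' c 0 h2 h0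
    exact e1.reachable.trans e2.reachable.symm
  have reduceMod : ∀ c, c < m → 0 < n - m → G.Reachable (Sum.inl c) (Sum.inl (c % (n - m))) := by
    intro c
    induction c using Nat.strong_induction_on with
    | _ c ih =>
      intro hcm hd
      by_cases hc : c < n - m
      · rw [Nat.mod_eq_of_lt hc]
      · have h1 : n - m ≤ c := by omega
        have hrec := ih (c - (n - m)) (by omega) (by omega) hd
        have heq : (c - (n - m)) % (n - m) = c % (n - m) := (Nat.mod_eq_sub_mod h1).symm
        exact (stepDown c h1 hcm).symm.trans (heq ▸ hrec)
  -- single "add s modulo (n-m)" step, inside [0, n-m)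
  have hstepS : ∀ s ∈ S, ∀ c, c < n - m →
      G.Reachable (Sum.inl c) (Sum.inl ((c + s) % (n - m))) := by
    intro s hs c hc
    have hd : 0 < n - m := by omega
    have hsd := hSsub s hs
    have e1 : G.Adj (Sum.inl c) (Sum.inr (c + s)) := hadj' c s (by omega) hs
    by_cases h : c + s < n - m
    · rw [Nat.mod_eq_of_lt h]
      have e2 : G.Adj (Sum.inl (c + s)) (Sum.inr (c + s)) := by
        simpa using hadj' (c + s) 0 (by omega) h0
      exact e1.reachable.trans e2.reachable.symm
    · have h2 : (c + s) % (n - m) = c + s - (n - m) := by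
        rw [Nat.mod_eq_sub_mod (by omega), Nat.mod_eq_of_lt (by omega)]
      rw [h2]
      have e2 : G.Adj (Sum.inl (c + s - (n - m))) (Sum.inr (c + s)) := by
        have := hadj' (c + s - (n - m)) (n - m) (by omega) hnm
        rwa [Nat.sub_add_cancel (by omega)] at this
      exact e1.reachable.trans e2.reachable.symm
  -- the subgroup of shifts realizable inside [0, n-m)
  let D : ℤ := ((n - m : ℕ) : ℤ)
  have hDdef : D = ((n - m : ℕ) : ℤ) := rfl
  let H : AddSubgroup ℤ :=
    { carrier := {y : ℤ | ∀ c : ℕ, c < n - m →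
        G.Reachable (Sum.inl c) (Sum.inl (((c : ℤ) + y) % D).toNat)}
      zero_mem' := by
        intro c hc
        have h1 : ((c : ℤ) + 0) % D = (c : ℤ) := by
          rw [add_zero]
          exact Int.emod_eq_of_lt (by positivity) (by rw [hDdef]; exact_mod_cast hc)
        rw [h1, Int.toNat_natCast]
      add_mem' := by
        intro y1 y2 h1 h2 c hc
        have hD0 : (0 : ℤ) < D := by rw [hDdef]; omega
        have hx0 : (0 : ℤ) ≤ ((c : ℤ) + y1) % D := Int.emod_nonneg _ (by omega)
        have hxD : ((c : ℤ) + y1) % D < D := Int.emod_lt_of_pos _ hD0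
        set c1 : ℕ := (((c : ℤ) + y1) % D).toNat with hc1
        have hc1d : c1 < n - m := by
          have hlt : (c1 : ℤ) < D := by rw [hc1, Int.toNat_of_nonneg hx0]; exact hxD
          rw [hDdef] at hlt; omega
        have r1 := h1 c hc
        have r2 := h2 c1 hc1d
        have hcast : (c1 : ℤ) = ((c : ℤ) + y1) % D := by rw [hc1]; exact Int.toNat_of_nonneg hx0
        have hkey : (((c1 : ℤ) + y2) % D).toNat = (((c : ℤ) + (y1 + y2)) % D).toNat := by
          rw [hcast, Int.emod_add_emod, add_assoc]
        rw [← hkey]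
        exact r1.trans r2
      neg_mem' := by
        intro y hy c hc
        have hD0 : (0 : ℤ) < D := by rw [hDdef]; omega
        have hx0 : (0 : ℤ) ≤ ((c : ℤ) + -y) % D := Int.emod_nonneg _ (by omega)
        have hxD : ((c : ℤ) + -y) % D < D := Int.emod_lt_of_pos _ hD0
        set c1 : ℕ := (((c : ℤ) + -y) % D).toNat with hc1
        have hc1d : c1 < n - m := by
          have hlt : (c1 : ℤ) < D := by rw [hc1, Int.toNat_of_nonneg hx0]; exact hxD
          rw [hDdef] at hlt; omega
        have hcast : (c1 : ℤ) = ((c : ℤ) + -y) % D := by rw [hc1]; exact Int.toNat_of_nonneg hx0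
        have r1 := hy c1 hc1d
        have hkey : (((c1 : ℤ) + y) % D).toNat = c := by
          rw [hcast, Int.emod_add_emod]
          have : (c : ℤ) + -y + y = (c : ℤ) := by ring
          rw [this, Int.emod_eq_of_lt (by positivity) (by rw [hDdef]; exact_mod_cast hc),
            Int.toNat_natCast]
        rw [hkey] at r1
        exact r1.symm }
  have hmemH : ∀ y : ℤ, (y ∈ H ↔ ∀ c : ℕ, c < n - m →
      G.Reachable (Sum.inl c) (Sum.inl (((c : ℤ) + y) % D).toNat)) := fun y => Iff.rfl
  -- each s ∈ S is in H
  have hSmem : ∀ s ∈ S, ((s : ℕ) : ℤ) ∈ H := by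
    intro s hs
    rw [hmemH]
    intro c hc
    have hcalc : (((c : ℤ) + (s : ℤ)) % D).toNat = (c + s) % (n - m) := by
      rw [hDdef, ← Nat.cast_add, ← Int.natCast_mod, Int.toNat_natCast]
    rw [hcalc]
    exact hstepS s hs c hc
  -- Bezout: gcd of two members is a member
  have hbez : ∀ a b : ℤ, a ∈ H → b ∈ H → ((Int.gcd a b : ℕ) : ℤ) ∈ H := by
    intro a b ha hb
    rw [Int.gcd_eq_gcd_ab a b]
    have h1 : a * Int.gcdA a b ∈ H := by
      have := AddSubgroup.zsmul_mem H ha (Int.gcdA a b)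
      simpa [smul_eq_mul, mul_comm] using this
    have h2 : b * Int.gcdB a b ∈ H := by
      have := AddSubgroup.zsmul_mem H hb (Int.gcdB a b)
      simpa [smul_eq_mul, mul_comm] using this
    exact H.add_mem h1 h2
  -- the gcd of S is in H
  have hgcdS : ∀ F : Finset ℕ, (∀ s ∈ F, ((s : ℕ) : ℤ) ∈ H) → ((F.gcd id : ℕ) : ℤ) ∈ H := by
    intro F
    induction F using Finset.induction_on with
    | empty => intro _; simpa using H.zero_mem
    | insert a F' hni ih =>
      intro hmem
      have ha := hmem a (Finset.mem_insert_self a F')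
      have hF := ih fun s hs => hmem s (Finset.mem_insert_of_mem hs)
      have hg : (insert a F').gcd id = Nat.gcd a (F'.gcd id) := by
        rw [Finset.gcd_insert]; rfl
      rw [hg, ← Int.gcd_natCast_natCast]
      exact hbez _ _ ha hF
  have hGmem : ((S.gcd id : ℕ) : ℤ) ∈ H := hgcdS S hSmem
  have hZmem : ∀ y : ℤ, ((S.gcd id : ℕ) : ℤ) ∣ y → y ∈ H := by
    intro y hy
    obtain ⟨t, rfl⟩ := hy
    have := AddSubgroup.zsmul_mem H hGmem t
    simpa [smul_eq_mul, mul_comm] using this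
  -- connectivity of pattern positions in the same residue class
  have connMod : ∀ a b : ℕ, a < m → b < m → 0 < n - m →
      ((S.gcd id : ℕ) : ℤ) ∣ ((b : ℤ) - (a : ℤ)) →
      G.Reachable (Sum.inl a) (Sum.inl b) := by
    intro a b ham hbm hd hdvd
    have r1 := reduceMod a ham hd
    have r2 := reduceMod b hbm hd
    have hy := hZmem _ hdvd
    rw [hmemH] at hy
    have r3 := hy (a % (n - m)) (Nat.mod_lt _ hd)
    have hcalc : ((((a % (n - m) : ℕ)) : ℤ) + ((b : ℤ) - (a : ℤ))) % D
        = (((b % (n - m) : ℕ)) : ℤ) := by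
      rw [Int.natCast_mod, hDdef, Int.emod_add_emod]
      have h1 : (a : ℤ) + ((b : ℤ) - (a : ℤ)) = (b : ℤ) := by ring
      rw [h1, Int.natCast_mod]
    rw [hcalc, Int.toNat_natCast] at r3
    exact (r1.trans r3).trans r2.symm
  -- key reachability lemma
  have key : ∀ x ≤ n - m, S.gcd id ∣ x → ∀ j < m,
      G.Reachable (Sum.inl j) (Sum.inr (x + j)) := by
    intro x hx hgx j hj
    rcases Nat.eq_zero_or_pos x with rfl | hxpos
    · have := (hadj' j 0 hj h0).reachable
      simpa using this
    · have hd : 0 < n - m := by omega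
      have hgd : S.gcd id ∣ n - m := by
        simpa using Finset.gcd_dvd (f := id) hnm
      by_cases hb : x + j < m
      · have e2 : G.Adj (Sum.inl (x + j)) (Sum.inr (x + j)) := by
          simpa using hadj' (x + j) 0 hb h0
        have hdvd : ((S.gcd id : ℕ) : ℤ) ∣ (((x + j : ℕ) : ℤ) - (j : ℤ)) := by
          have h1 : (((x + j : ℕ) : ℤ) - (j : ℤ)) = ((x : ℕ) : ℤ) := by push_cast; ring
          rw [h1]
          exact_mod_cast Int.natCast_dvd_natCast.mpr hgx
        exact (connMod j (x + j) hj hb hd hdvd).trans e2.reachable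
      · have hbm : x + j - (n - m) < m := by omega
        have hge : n - m ≤ x + j := by omega
        have e2 : G.Adj (Sum.inl (x + j - (n - m))) (Sum.inr (x + j)) := by
          have := hadj' (x + j - (n - m)) (n - m) hbm hnm
          rwa [Nat.sub_add_cancel hge] at this
        have hdvd : ((S.gcd id : ℕ) : ℤ) ∣ (((x + j - (n - m) : ℕ) : ℤ) - (j : ℤ)) := by
          have h1 : (((x + j - (n - m) : ℕ) : ℤ) - (j : ℤ)) = ((x : ℕ) : ℤ) - ((n - m : ℕ) : ℤ) := by
            omega
          rw [h1]
          exact dvd_sub (Int.natCast_dvd_natCast.mpr hgx) (Int.natCast_dvd_natCast.mpr hgd)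
        exact (connMod j (x + j - (n - m)) hj hbm hd hdvd).trans e2.reachable
  -- assemble part 2
  refine ⟨part1, ?_⟩
  intro x hx hgx
  have hmain : ∀ j < m,
      (P j = T (x + j) ↔ Psharp j = Tsharp (x + j)) ∧
      (P j ≠ T (x + j) →
        Psharp j = Sum.inl (P j) ∧ Tsharp (x + j) = Sum.inl (T (x + j))) := by
    intro j hj
    have hxjn : x + j < n := by omega
    have hr := key x hx hgx j hj
    have hsc : G.connectedComponentMk (Sum.inl j) = G.connectedComponentMk (Sum.inr (x + j)) :=
      SimpleGraph.ConnectedComponent.sound hr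
    constructor
    · constructor
      · intro hPT
        by_cases hB : Black (G.connectedComponentMk (Sum.inl j))
        · rw [hPb j hj hB, hTb (x + j) hxjn (hsc ▸ hB), hsc]
        · rw [hPr j hj hB, hTr (x + j) hxjn (hsc ▸ hB), hPT]
      · intro h; exact part1 j hj (x + j) hxjn h
    · intro hne
      have hB : ¬ Black (G.connectedComponentMk (Sum.inl j)) := by
        intro hB
        exact hne (by simpa using reachVal _ _ hr hB)
      exact ⟨hPr j hj hB, hTr (x + j) hxjn (hsc ▸ hB)⟩
  refine ⟨hmain, ?_⟩
  congr 1
  ext j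
  simp only [Set.mem_setOf_eq]
  constructor
  · rintro ⟨h1, h2⟩; exact ⟨h1, fun h => h2 (((hmain j h1).1).mpr h)⟩
  · rintro ⟨h1, h2⟩; exact ⟨h1, fun h => h2 (((hmain j h1).1).mp h)⟩
end

section
/- Let P be a string of length m, T a string of length n ≤ 2m, and k a threshold, and suppose {0, n−m} ⊆ S ⊆ [0, n−m] satisfies gcd(S) = gcd(Occ^H_k(P,T)) and {0, n−m} ⊆ Occ^H_k(P,T). Let P^#, T^# be the S-cores (obtained by masking black components of 𝐆_S with sentinels). Then Occ^H_k(P,T) = Occ^H_k(P^#, T^#). -/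
/-- Every integer multiple of `gcd S` is a sum of a list of signed elements of `S`. -/
lemma exists_signed_list_of_gcd_dvd (S : Finset ℕ) :
    ∀ d : ℤ, (((S.gcd id : ℕ) : ℤ) ∣ d) → ∃ L : List ℤ, (∀ z ∈ L, z.natAbs ∈ S) ∧ L.sum = d := by
  classical
  induction S using Finset.induction_on with
  | empty =>
    intro d hd
    simp only [Finset.gcd_empty, Nat.cast_zero, zero_dvd_iff] at hd
    exact ⟨[], by simp, by simp [hd]⟩
  | @insert a s ha ih =>
    intro d hd
    rw [Finset.gcd_insert] at hd
    have hg : (GCDMonoid.gcd (id a) (s.gcd id)) = Nat.gcd a (s.gcd id) := rfl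
    rw [hg] at hd
    obtain ⟨t, ht⟩ := hd
    set gS := s.gcd id with hgS
    set u := Int.gcdA (a : ℤ) (gS : ℤ) with hu
    set v := Int.gcdB (a : ℤ) (gS : ℤ) with hv
    have hbez : ((Nat.gcd a gS : ℕ) : ℤ) = (a : ℤ) * u + (gS : ℤ) * v := by
      have := Int.gcd_eq_gcd_ab (a : ℤ) (gS : ℤ)
      rwa [Int.gcd_natCast_natCast] at this
    obtain ⟨L', hL'mem, hL'sum⟩ := ih ((gS : ℤ) * (v * t)) ⟨v * t, rfl⟩
    set La : List ℤ := List.replicate (u * t).natAbs (if 0 ≤ u * t then (a : ℤ) else -(a : ℤ)) with hLa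
    have hsa : La.sum = (a : ℤ) * (u * t) := by
      rcases le_or_gt 0 (u * t) with h | h
      · rw [hLa, if_pos h, List.sum_replicate, nsmul_eq_mul, Int.natAbs_of_nonneg h]; ring
      · rw [hLa, if_neg (not_le.mpr h), List.sum_replicate, nsmul_eq_mul,
          Int.ofNat_natAbs_of_nonpos h.le]; ring
    refine ⟨La ++ L', ?_, ?_⟩
    · intro z hz
      rcases List.mem_append.1 hz with hz | hz
      · have := List.eq_of_mem_replicate hz
        rcases le_or_gt 0 (u * t) with h | h
        · rw [if_pos h] at this; rw [this]; simp
        · rw [if_neg (not_le.mpr h)] at this; rw [this]; simp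
      · exact Finset.mem_insert_of_mem (hL'mem z hz)
    · rw [List.sum_append, hsa, hL'sum, ht, hbez]; ring

open Classical in
/-- The set `Occ^H_k(P,T) = {x ∈ [0, n−m] : δ_H(P, T[x..x+m)) ≤ k}` of
`k`-mismatch occurrences (strings modeled as functions with given lengths). -/
noncomputable def OccHF {α : Type*} (k m n : ℕ) (P T : ℕ → α) : Finset ℕ :=
  (Finset.range (n - m + 1)).filter fun x =>
    Set.ncard {j | j < m ∧ P j ≠ T (x + j)} ≤ k

/-- Let `P` (length `m`), `T` (length `n ≤ 2m`), `k` a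
threshold, and `{0, n−m} ⊆ S ⊆ [0, n−m]` with `gcd S = gcd (Occ^H_k(P,T))` and
`{0, n−m} ⊆ Occ^H_k(P,T)`.  Let `P^#, T^#` be the `S`-cores (black components
of the mismatch inference graph `𝐆_S` masked by sentinels unique to each
component).  Then `Occ^H_k(P,T) = Occ^H_k(P^#, T^#)`. -/
theorem s_core_preserves_occurrences {α : Type*}
    (m n k : ℕ) (hm : 0 < m) (hk : 0 < k) (hmn : m ≤ n) (hn : n ≤ 2 * m)
    (S : Finset ℕ) (hSsub : ∀ s ∈ S, s ≤ n - m) (h0 : 0 ∈ S) (hnm : n - m ∈ S)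
    (P T : ℕ → α)
    (hgcd : S.gcd id = (OccHF k m n P T).gcd id)
    (h0occ : 0 ∈ OccHF k m n P T) (hnmocc : n - m ∈ OccHF k m n P T)
    (G : SimpleGraph (ℕ ⊕ ℕ))
    (hAdj : ∀ u v, G.Adj u v ↔
      ∃ i j, i < m ∧ j < n ∧ (∃ s ∈ S, j = i + s) ∧
        ((u = Sum.inl i ∧ v = Sum.inr j) ∨ (u = Sum.inr j ∧ v = Sum.inl i)))
    (Black : G.ConnectedComponent → Prop)
    (hBlack : ∀ C, Black C ↔
      ∀ i j, i < m → j < n → G.Adj (Sum.inl i) (Sum.inr j) →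
        G.connectedComponentMk (Sum.inl i) = C → P i = T j)
    (Psharp Tsharp : ℕ → α ⊕ G.ConnectedComponent)
    (hPb : ∀ i < m, Black (G.connectedComponentMk (Sum.inl i)) →
      Psharp i = Sum.inr (G.connectedComponentMk (Sum.inl i)))
    (hPr : ∀ i < m, ¬ Black (G.connectedComponentMk (Sum.inl i)) →
      Psharp i = Sum.inl (P i))
    (hTb : ∀ j < n, Black (G.connectedComponentMk (Sum.inr j)) →
      Tsharp j = Sum.inr (G.connectedComponentMk (Sum.inr j)))
    (hTr : ∀ j < n, ¬ Black (G.connectedComponentMk (Sum.inr j)) →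
      Tsharp j = Sum.inl (T j)) :
    OccHF k m n P T = OccHF k m n Psharp Tsharp := by
  classical
  set w := n - m with hwdef
  have hwm : w ≤ m := by omega
  have hmw : m + w = n := by omega
  have mkeq : ∀ {u v : ℕ ⊕ ℕ}, G.Adj u v →
      G.connectedComponentMk u = G.connectedComponentMk v :=
    fun h => (SimpleGraph.ConnectedComponent.eq).2 h.reachable
  -- basic edges
  have adj1 : ∀ i s, i < m → s ∈ S → G.Adj (Sum.inl i) (Sum.inr (i + s)) := by
    intro i s hi hs
    rw [hAdj]
    have hsle := hSsub s hs
    exact ⟨i, i + s, hi, by omega, ⟨s, hs, rfl⟩, Or.inl ⟨rfl, rfl⟩⟩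
  -- composite move on pattern positions
  have move : ∀ i s s', i < m → s ∈ S → s' ∈ S → s' ≤ i + s → i + s - s' < m →
      G.connectedComponentMk (Sum.inl i) = G.connectedComponentMk (Sum.inl (i + s - s')) := by
    intro i s s' hi hs hs' h1 h2
    have e1 := adj1 i s hi hs
    have e2 := adj1 (i + s - s') s' h2 hs'
    rw [show i + s - s' + s' = i + s by omega] at e2
    exact (mkeq e1).trans (mkeq e2).symm
  -- general walk lemma
  have walk : ∀ L : List ℤ, (∀ z ∈ L, z.natAbs ∈ S) → ∀ i : ℕ, i < m →
      ∃ p : ℕ, ∃ J : ℤ, p < m ∧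
        G.connectedComponentMk (Sum.inl i) = G.connectedComponentMk (Sum.inl p) ∧
        (p : ℤ) = (i : ℤ) + L.sum + J * (w : ℤ) := by
    intro L
    induction L with
    | nil =>
      intro _ i hi
      exact ⟨i, 0, hi, rfl, by simp⟩
    | cons z L ih =>
      intro hmem i hi
      have hz : z.natAbs ∈ S := hmem z List.mem_cons_self
      have hrest : ∀ y ∈ L, y.natAbs ∈ S := fun y hy => hmem y (List.mem_cons_of_mem z hy)
      set s := z.natAbs with hs
      have hsw : s ≤ w := hSsub s hz
      -- one step: from i to some p1 with (p1:ℤ) = i + z + ε * w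
      have step : ∃ p1 : ℕ, ∃ ε : ℤ, p1 < m ∧
          G.connectedComponentMk (Sum.inl i) = G.connectedComponentMk (Sum.inl p1) ∧
          (p1 : ℤ) = (i : ℤ) + z + ε * (w : ℤ) := by
        rcases le_or_gt 0 z with hzpos | hzneg
        · have hzs : (s : ℤ) = z := Int.natAbs_of_nonneg hzpos
          by_cases hcase : i + s < m
          · refine ⟨i + s, 0, hcase, ?_, by push_cast; omega⟩
            have := move i s 0 hi hz h0 (by omega) (by omega)
            simpa using this
          · refine ⟨i + s - w, 0 - 1, by omega, ?_, by push_cast; omega⟩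
            exact move i s w hi hz hnm (by omega) (by omega)
        · have hzs : (s : ℤ) = -z := by
            rw [hs]; exact Int.ofNat_natAbs_of_nonpos hzneg.le
          by_cases hcase : s ≤ i
          · refine ⟨i - s, 0, by omega, ?_, by push_cast; omega⟩
            have := move i 0 s hi h0 hz (by omega) (by omega)
            rw [show i + 0 - s = i - s by omega] at this
            exact this
          · refine ⟨i + w - s, 1, by omega, ?_, by push_cast; omega⟩
            have := move i w s hi hnm hz (by omega) (by omega)
            rw [show i + w - s = i + w - s by omega] at this
            exact this
      obtain ⟨p1, ε, hp1m, hrel1, heq1⟩ := step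
      obtain ⟨p, J, hpm, hrel2, heq2⟩ := ih hrest p1 hp1m
      refine ⟨p, J + ε, hpm, hrel1.trans hrel2, ?_⟩
      rw [heq2, heq1, List.sum_cons]
      push_cast
      ring
  -- ladder: adjust by multiples of w
  have ladder : ∀ J : ℤ, ∀ p t : ℕ, p < m → t < m → (p : ℤ) = (t : ℤ) + J * (w : ℤ) →
      G.connectedComponentMk (Sum.inl p) = G.connectedComponentMk (Sum.inl t) := by
    intro J
    induction J using Int.induction_on with
    | zero =>
      intro p t hp ht h
      have hpt : p = t := by omega
      subst hpt
      rfl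
    | succ j ihj =>
      intro p t hp ht h
      by_cases hw0 : w = 0
      · have : p = t := by rw [hw0] at h; push_cast at h; omega
        rw [this]
      · have hpw : w ≤ p := by
          have hj : (0:ℤ) ≤ (j:ℤ) := by positivity
          nlinarith [h, Int.natCast_nonneg t, Int.natCast_nonneg w]
        have hstep := move p 0 w hp h0 hnm (by omega) (by omega)
        rw [show p + 0 - w = p - w by omega] at hstep
        have : ((p - w : ℕ) : ℤ) = (t : ℤ) + (j : ℤ) * (w : ℤ) := by
          have : ((p - w : ℕ) : ℤ) = (p : ℤ) - w := by omega
          rw [this, h]; push_cast; ring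
        exact hstep.trans (ihj (p - w) t (by omega) ht this)
    | pred j ihj =>
      intro p t hp ht h
      have hpww : p + w < m := by
        have : ((p + w : ℕ) : ℤ) = (t : ℤ) + (-(j : ℤ)) * (w : ℤ) := by push_cast; rw [h]; push_cast; ring
        have hj : (0:ℤ) ≤ (j:ℤ) := by positivity
        have : ((p + w : ℕ) : ℤ) ≤ (t : ℤ) := by
          rw [this]; nlinarith [Int.natCast_nonneg w]
        omega
      have hstep := move p w 0 hp hnm h0 (by omega) (by omega)
      rw [show p + w - 0 = p + w by omega] at hstep
      have heq : ((p + w : ℕ) : ℤ) = (t : ℤ) + (-(j : ℤ)) * (w : ℤ) := by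
        push_cast; rw [h]; push_cast; ring
      exact hstep.trans (ihj (p + w) t hpww ht heq)
  -- main reachability on the pattern side
  have reach : ∀ i i' : ℕ, i < m → i' < m → (((S.gcd id : ℕ) : ℤ)) ∣ ((i' : ℤ) - i) →
      G.connectedComponentMk (Sum.inl i) = G.connectedComponentMk (Sum.inl i') := by
    intro i i' hi hi' hdvd
    obtain ⟨L, hL, hsum⟩ := exists_signed_list_of_gcd_dvd S _ hdvd
    obtain ⟨p, J, hpm, hrel, heq⟩ := walk L hL i hi
    rw [hsum] at heq
    have heq' : (p : ℤ) = (i' : ℤ) + J * (w : ℤ) := by linarith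
    exact hrel.trans (ladder J p i' hpm hi' heq')
  -- connect inl i with inr (x + i) when gcd S divides x
  have compx : ∀ x i, x ≤ w → i < m → (((S.gcd id : ℕ) : ℤ)) ∣ (x : ℤ) →
      G.connectedComponentMk (Sum.inl i) = G.connectedComponentMk (Sum.inr (x + i)) := by
    intro x i hx hi hdvd
    by_cases hcase : x + i < m
    · have h1 : G.Adj (Sum.inl (x + i)) (Sum.inr (x + i)) := by
        have := adj1 (x + i) 0 hcase h0
        simpa using this
      have h2 := reach i (x + i) hi hcase (by push_cast; simpa using hdvd)
      exact h2.trans (mkeq h1)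
    · have h2 : x + i - w < m := by omega
      have h1 : G.Adj (Sum.inl (x + i - w)) (Sum.inr (x + i)) := by
        have := adj1 (x + i - w) w h2 hnm
        rw [show x + i - w + w = x + i by omega] at this
        exact this
      have hgw : (((S.gcd id : ℕ) : ℤ)) ∣ (w : ℤ) :=
        Int.natCast_dvd_natCast.mpr (Finset.gcd_dvd hnm)
      have hdw : (((S.gcd id : ℕ) : ℤ)) ∣ ((x + i - w : ℕ) : ℤ) - (i : ℤ) := by
        have : ((x + i - w : ℕ) : ℤ) - (i : ℤ) = (x : ℤ) - w := by omega
        rw [this]; exact dvd_sub hdvd hgw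
      exact (reach i (x + i - w) hi h2 hdw).trans (mkeq h1)
  -- values constant along walks in black components
  have blackwalk : ∀ (C : G.ConnectedComponent), Black C → ∀ u v (p : G.Walk u v),
      G.connectedComponentMk u = C → Sum.elim P T u = Sum.elim P T v := by
    intro C hC u v p
    induction p with
    | nil => intro _; rfl
    | @cons u u' v h p ih =>
      intro hu
      have hu' : G.connectedComponentMk u' = C := (mkeq h).symm.trans hu
      have hstep : Sum.elim P T u = Sum.elim P T u' := by
        obtain ⟨i, j, hi, hj, hsij, hcase⟩ := (hAdj u u').1 h
        have hadjij : G.Adj (Sum.inl i) (Sum.inr j) := by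
          rw [hAdj]; exact ⟨i, j, hi, hj, hsij, Or.inl ⟨rfl, rfl⟩⟩
        rcases hcase with ⟨h1, h2⟩ | ⟨h1, h2⟩
        · have hPT : P i = T j := (hBlack C).1 hC i j hi hj hadjij (by rw [← h1]; exact hu)
          rw [h1, h2]; simpa using hPT
        · have hPT : P i = T j := (hBlack C).1 hC i j hi hj hadjij
            (by rw [mkeq hadjij, ← h1]; exact hu)
          rw [h1, h2]; simpa using hPT.symm
      exact hstep.trans (ih hu')
  have black_eq : ∀ i j, i < m → j < n →
      G.connectedComponentMk (Sum.inl i) = G.connectedComponentMk (Sum.inr j) →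
      Black (G.connectedComponentMk (Sum.inl i)) → P i = T j := by
    intro i j hi hj hcomp hb
    have hr : G.Reachable (Sum.inl i) (Sum.inr j) := (SimpleGraph.ConnectedComponent.eq).1 hcomp
    obtain ⟨p⟩ := hr
    have := blackwalk _ hb _ _ p rfl
    simpa using this
  -- Lemma A: masking creates no new equalities
  have lemA : ∀ i j, i < m → j < n → Psharp i = Tsharp j → P i = T j := by
    intro i j hi hj hst
    by_cases hbi : Black (G.connectedComponentMk (Sum.inl i)) <;>
      by_cases hbj : Black (G.connectedComponentMk (Sum.inr j))
    · rw [hPb i hi hbi, hTb j hj hbj] at hst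
      have hc : G.connectedComponentMk (Sum.inl i) = G.connectedComponentMk (Sum.inr j) :=
        Sum.inr.inj hst
      exact black_eq i j hi hj hc hbi
    · rw [hPb i hi hbi, hTr j hj hbj] at hst; exact absurd hst (by simp)
    · rw [hPr i hi hbi, hTb j hj hbj] at hst; exact absurd hst (by simp)
    · rw [hPr i hi hbi, hTr j hj hbj] at hst; exact Sum.inl.inj hst
  -- Lemma B: at occurrence shifts, masking creates no new mismatches
  have lemB : ∀ x i, x ∈ OccHF k m n P T → i < m → P i = T (x + i) →
      Psharp i = Tsharp (x + i) := by
    intro x i hx hi hPT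
    have hxr : x < n - m + 1 := Finset.mem_range.1 (Finset.mem_filter.1 hx).1
    have hxw : x ≤ w := by omega
    have hdvd : (((S.gcd id : ℕ) : ℤ)) ∣ (x : ℤ) := by
      have h1 : (OccHF k m n P T).gcd id ∣ x := Finset.gcd_dvd hx
      rw [hgcd]; exact_mod_cast h1
    have hcomp := compx x i hxw hi hdvd
    have hjn : x + i < n := by omega
    by_cases hb : Black (G.connectedComponentMk (Sum.inl i))
    · rw [hPb i hi hb, hTb (x + i) hjn (hcomp ▸ hb), hcomp]
    · rw [hPr i hi hb, hTr (x + i) hjn (fun hc => hb (hcomp ▸ hc)), hPT]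
  -- wrap up
  ext x
  simp only [OccHF, Finset.mem_filter, Finset.mem_range]
  constructor
  · rintro ⟨hxr, hcard⟩
    refine ⟨hxr, ?_⟩
    have hxmem : x ∈ OccHF k m n P T :=
      Finset.mem_filter.2 ⟨Finset.mem_range.2 hxr, hcard⟩
    have hsub : {j | j < m ∧ Psharp j ≠ Tsharp (x + j)} ⊆ {j | j < m ∧ P j ≠ T (x + j)} := by
      rintro j ⟨hj, hne⟩
      exact ⟨hj, fun h => hne (lemB x j hxmem hj h)⟩
    have hfin : {j | j < m ∧ P j ≠ T (x + j)}.Finite :=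
      (Set.finite_Iio m).subset (fun j hj => hj.1)
    exact le_trans (Set.ncard_le_ncard hsub hfin) hcard
  · rintro ⟨hxr, hcard⟩
    refine ⟨hxr, ?_⟩
    have hsub : {j | j < m ∧ P j ≠ T (x + j)} ⊆ {j | j < m ∧ Psharp j ≠ Tsharp (x + j)} := by
      rintro j ⟨hj, hne⟩
      exact ⟨hj, fun h => hne (lemA j (x + j) hj (by omega) h)⟩
    have hfin : {j | j < m ∧ Psharp j ≠ Tsharp (x + j)}.Finite :=
      (Set.finite_Iio m).subset (fun j hj => hj.1)
    exact le_trans (Set.ncard_le_ncard hsub hfin) hcard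
end

section
/- Let P be a pattern of length m, T a text of length n, k > 0 a threshold, d ≥ 2k a positive integer, and Q a primitive string with |Q| ≤ m/(8d), δ_H(P, Q*) = d, and δ_H(T, rot^a(Q)*) ≤ 4d for some a ∈ [0,|Q|). Then for every x ∈ Occ^H_k(P,T), the set M = {x' ∈ Mis(P, Q*) ∩ Mis(T[x..x+m), Q*) : the characters cancel, i.e., P[x'] = T[x+x']} satisfies |M| ≥ d − k ≥ d/2. In particular, for a uniformly random y ∈ Mis(P,Q*), with probability at least 1/2 there exists y' ∈ Mis(T, rot^a(Q)*) with x = y' − y. -/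
lemma rot_gives_period {α : Type*} (Q : ℕ → α) (q s : ℕ) (hq : 0 < q) (hs : 0 < s) (hsq : s < q)
    (h : ∀ i, i < q → Q i = Q ((i + s) % q)) :
    ∃ p, 0 < p ∧ p < q ∧ p ∣ q ∧ ∀ i, i + p < q → Q i = Q (i + p) := by
  have key : ∀ c i, Q (i % q) = Q ((i + c * s) % q) := by
    intro c
    induction c with
    | zero => simp
    | succ c ih =>
      intro i
      have h2 := h ((i + c * s) % q) (Nat.mod_lt _ hq)
      rw [ih i, h2, Nat.mod_add_mod]
      ring_nf
  set g := Nat.gcd s q with hg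
  have hbez : (g : ℤ) = s * Nat.gcdA s q + q * Nat.gcdB s q := Nat.gcd_eq_gcd_ab s q
  set A := Nat.gcdA s q with hA
  have hqZ : (q : ℤ) ≠ 0 := by positivity
  have hAm : (0 : ℤ) ≤ A % q := Int.emod_nonneg A hqZ
  set c := (A % (q : ℤ)).toNat with hc
  have hcZ : (c : ℤ) = A % q := Int.toNat_of_nonneg hAm
  have e1 : ((c * s : ℕ) : ℤ) % q = (g : ℤ) % q := by
    push_cast
    rw [hcZ, Int.mul_emod, Int.emod_emod_of_dvd A dvd_rfl, ← Int.mul_emod]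
    have : A * (s : ℤ) = (g : ℤ) - q * Nat.gcdB s q := by linarith [hbez]
    rw [this]
    simp [Int.sub_emod, Int.mul_emod_right]
  have e2 : (c * s) % q = g % q := by
    have : (((c * s) % q : ℕ) : ℤ) = ((g % q : ℕ) : ℤ) := by
      push_cast
      exact e1
    exact_mod_cast this
  have hgq : g ∣ q := Nat.gcd_dvd_right s q
  have hg0 : 0 < g := Nat.gcd_pos_of_pos_left q hs
  have hgs : g ≤ s := Nat.le_of_dvd hs (Nat.gcd_dvd_left s q)
  refine ⟨g, hg0, lt_of_le_of_lt hgs hsq, hgq, ?_⟩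
  intro i hi
  have := key c i
  rw [Nat.mod_eq_of_lt (by omega)] at this
  rw [this]
  have : (i + c * s) % q = (i + g) % q := by
    rw [Nat.add_mod, e2, ← Nat.add_mod]
  rw [this, Nat.mod_eq_of_lt hi]



/-- Let `P` (length `m`), `T` (length `n`), `k > 0`,
`d ≥ 2k`, and `Q` primitive with `|Q| ≤ m/(8d)`, `δ_H(P, Q*) = d`, and
`δ_H(T, rot^a(Q)*) ≤ 4d` for some `a ∈ [0,q)`.  Then for every
`x ∈ Occ^H_k(P,T)` the set
`M = {x' ∈ Mis(P,Q*) ∩ Mis(T[x..x+m),Q*) : P[x'] = T[x+x']}`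
of cancelling mismatches satisfies `|M| ≥ d − k ≥ d/2`; in particular, at
least half of the `d` elements `y ∈ Mis(P,Q*)` admit `y' ∈ Mis(T, rot^a(Q)*)`
with `x = y' − y` (i.e. `y' = x + y`). -/
theorem mismatch_cancellation {α : Type*} (m n q d k a x : ℕ)
    (P T Q : ℕ → α)
    (hm : 0 < m) (hmn : m ≤ n) (hk : 0 < k) (hdk : 2 * k ≤ d) (hq : 0 < q)
    (hqm : 8 * d * q ≤ m) (hprim : PrimitiveFun Q q) (ha : a < q)
    (hP : Set.ncard {i | i < m ∧ P i ≠ Q (i % q)} = d)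
    (hT : Set.ncard {i | i < n ∧ T i ≠ Q ((i + q - a) % q)} ≤ 4 * d)
    (hx : x ≤ n - m)
    (hocc : Set.ncard {j | j < m ∧ P j ≠ T (x + j)} ≤ k) :
    (d - k ≤ Set.ncard {x' | x' < m ∧ P x' ≠ Q (x' % q) ∧
        T (x + x') ≠ Q (x' % q) ∧ P x' = T (x + x')}) ∧
    (d ≤ 2 * Set.ncard {x' | x' < m ∧ P x' ≠ Q (x' % q) ∧
        T (x + x') ≠ Q (x' % q) ∧ P x' = T (x + x')}) ∧
    (d ≤ 2 * Set.ncard {y | (y < m ∧ P y ≠ Q (y % q)) ∧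
        ∃ y', (y' < n ∧ T y' ≠ Q ((y' + q - a) % q)) ∧ y' = x + y}) := by
  set MisP := {i | i < m ∧ P i ≠ Q (i % q)} with hMisP
  set Occ := {j | j < m ∧ P j ≠ T (x + j)} with hOcc
  set M := {x' | x' < m ∧ P x' ≠ Q (x' % q) ∧
      T (x + x') ≠ Q (x' % q) ∧ P x' = T (x + x')} with hM
  have hxn : x + m ≤ n := by omega
  have finIio : ∀ (S : Set ℕ) (N : ℕ), S ⊆ Set.Iio N → S.Finite :=
    fun S N h => (Set.finite_Iio N).subset h
  have hMfin : M.Finite := finIio M m (fun i hi => hi.1)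
  have hOccfin : Occ.Finite := finIio Occ m (fun i hi => hi.1)
  -- Part 1: d ≤ |M| + k
  have hsub1 : MisP ⊆ M ∪ Occ := by
    rintro i ⟨hi, hne⟩
    by_cases hPT : P i = T (x + i)
    · left; exact ⟨hi, hne, hPT ▸ hne, hPT⟩
    · right; exact ⟨hi, hPT⟩
  have h1 : d ≤ M.ncard + k := by
    calc d = MisP.ncard := hP.symm
      _ ≤ (M ∪ Occ).ncard := Set.ncard_le_ncard hsub1 (hMfin.union hOccfin)
      _ ≤ M.ncard + Occ.ncard := Set.ncard_union_le M Occ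
      _ ≤ M.ncard + k := by omega
  refine ⟨by omega, by omega, ?_⟩
  -- Part 3
  set s := (x + q - a) % q with hsdef
  have hrew : ∀ j : ℕ, (x + j + q - a) % q = (j + s) % q := by
    intro j
    have e : x + j + q - a = j + (x + q - a) := by omega
    rw [e, hsdef]
    exact (Nat.add_mod_mod j (x + q - a) q).symm
  have hs0 : s = 0 := by
    by_contra hs0
    have hslt : s < q := Nat.mod_lt _ hq
    set D := {j | j < m ∧ Q (j % q) ≠ Q ((j + s) % q)} with hD
    set Tset := {j | j < m ∧ T (x + j) ≠ Q ((j + s) % q)} with hTset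
    set TMis := {i | i < n ∧ T i ≠ Q ((i + q - a) % q)} with hTMis
    have hTMfin : TMis.Finite := finIio TMis n (fun i hi => hi.1)
    have hTsetfin : Tset.Finite := finIio Tset m (fun i hi => hi.1)
    have hDfin : D.Finite := finIio D m (fun i hi => hi.1)
    have hsub2 : D ⊆ (MisP ∪ Occ) ∪ Tset := by
      rintro j ⟨hj, hne⟩
      by_cases h1' : P j = Q (j % q)
      · by_cases h2' : P j = T (x + j)
        · right; exact ⟨hj, by rw [← h2', h1']; exact hne⟩
        · left; right; exact ⟨hj, h2'⟩
      · left; left; exact ⟨hj, h1'⟩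
    have hTle : Tset.ncard ≤ TMis.ncard := by
      refine Set.ncard_le_ncard_of_injOn (fun j => x + j) ?_ ?_ hTMfin
      · rintro j ⟨hj, hne⟩
        show x + j ∈ TMis
        refine ⟨by omega, ?_⟩
        rw [hrew j]
        exact hne
      · intro u _ v _ h
        have h' : x + u = x + v := h
        omega
    have hDle : D.ncard ≤ d + k + 4 * d := by
      calc D.ncard ≤ ((MisP ∪ Occ) ∪ Tset).ncard :=
            Set.ncard_le_ncard hsub2 (((finIio MisP m fun i hi => hi.1).union hOccfin).union hTsetfin)
        _ ≤ (MisP ∪ Occ).ncard + Tset.ncard := Set.ncard_union_le _ _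
        _ ≤ MisP.ncard + Occ.ncard + Tset.ncard := by
            have := Set.ncard_union_le MisP Occ; omega
        _ ≤ d + k + 4 * d := by
            have h4 : TMis.ncard ≤ 4 * d := hT
            omega
    -- find a clean block
    have hclean : ∃ t, t < 8 * d ∧ ∀ j, t * q ≤ j → j < t * q + q → j ∉ D := by
      by_contra hcl
      push_neg at hcl
      choose f hf1 hf2 hf3 using hcl
      have hcard : Set.ncard {t : ℕ | t < 8 * d} = 8 * d := by
        rw [show {t : ℕ | t < 8 * d} = ↑(Finset.range (8 * d)) by ext t; simp,
          Set.ncard_coe_finset, Finset.card_range]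
      have h8 : 8 * d ≤ D.ncard := by
        rw [← hcard]
        refine Set.ncard_le_ncard_of_injOn
          (fun t => if h : t < 8 * d then f t h else 0) ?_ ?_ hDfin
        · intro t ht
          simp only [Set.mem_setOf_eq] at ht
          simpa [ht] using hf3 t ht
        · intro u hu v hv he
          simp only [Set.mem_setOf_eq] at hu hv
          simp only [hu, hv, dif_pos] at he
          have du : f u hu / q = u :=
            Nat.div_eq_of_lt_le (hf1 u hu) (by rw [Nat.succ_mul]; exact hf2 u hu)
          have dv : f v hv / q = v :=
            Nat.div_eq_of_lt_le (hf1 v hv) (by rw [Nat.succ_mul]; exact hf2 v hv)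
          rw [← du, ← dv, he]
      omega
    obtain ⟨t, ht, hcleant⟩ := hclean
    have hd0 : 0 < d := by omega
    have hrot : ∀ i, i < q → Q i = Q ((i + s) % q) := by
      intro i hi
      have hjm : t * q + i < m := by nlinarith
      have hnot := hcleant (t * q + i) (by omega) (by omega)
      rw [hD, Set.mem_setOf_eq] at hnot
      push_neg at hnot
      have hQQ := hnot hjm
      have e1 : (t * q + i) % q = i := by
        rw [Nat.add_comm, Nat.add_mul_mod_self_right, Nat.mod_eq_of_lt hi]
      have e2 : (t * q + i + s) % q = (i + s) % q := by
        have e : t * q + i + s = i + s + t * q := by ring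
        rw [e, Nat.add_mul_mod_self_right]
      rwa [e1, e2] at hQQ
    exact hprim (rot_gives_period Q q s hq (Nat.pos_of_ne_zero hs0) hslt hrot)
  -- now s = 0 : M ⊆ S3
  set S3 := {y | (y < m ∧ P y ≠ Q (y % q)) ∧
      ∃ y', (y' < n ∧ T y' ≠ Q ((y' + q - a) % q)) ∧ y' = x + y} with hS3
  have hsub3 : M ⊆ S3 := by
    rintro y ⟨hy, hne, hTne, _⟩
    refine ⟨⟨hy, hne⟩, x + y, ⟨by omega, ?_⟩, rfl⟩
    rw [hrew y, hs0, Nat.add_zero]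
    exact hTne
  have : M.ncard ≤ S3.ncard :=
    Set.ncard_le_ncard hsub3 (finIio S3 m (fun i hi => hi.1.1))
  omega
end

section
/- Let P, T be strings with |P| = m, |T| = n ≤ 3/2·m, let S ⊆ [0, n−m] with mismatch information for each element, and let E = E(P,T,S) be the system of substring equations consisting of, for each x ∈ S: (a) the character equations P[j] = D[a] and T[x+j] = D[b] for each (j, σ_a, σ_b) ∈ MI(P, T[x..x+m)), where D = σ_1⋯σ_c lists all characters appearing in the mismatch information; and (b) the equation P[y..y') = T[x+y..x+y') for each maximal interval [y,y') ⊆ [0,m) \ Mis(P, T[x..x+m)). Then the triple (T^#_S, P^#_S, D) is the unique solution of E up to renaming of placeholder characters, where P^#_S, T^#_S are the S-cores of P and T. -/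
/-- A triple of strings `(P', T', D')` over alphabet `β` satisfies the system
`E(P,T,S)` of substring equations built from the enhanced occurrences `S`:
(a) at every mismatch of an occurrence `x ∈ S`, the pattern/text characters
are equated with the corresponding character of the dictionary string `D`
(of length `c`); (b) on the (maximal intervals of) matching positions of an
occurrence `x ∈ S`, pattern and shifted text are equated position-wise. -/
def SatisfiesMISystem {α β : Type*} (m c : ℕ) (P T D : ℕ → α) (S : Finset ℕ)
    (P' T' D' : ℕ → β) : Prop :=
  ∀ x ∈ S, ∀ j < m,
    (P j = T (x + j) → P' j = T' (x + j)) ∧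
    (P j ≠ T (x + j) →
      (∀ a < c, D a = P j → P' j = D' a) ∧
      (∀ b < c, D b = T (x + j) → T' (x + j) = D' b))

/-- Let `P` (length `m`), `T` (length `n ≤ 3/2·m`),
`S ⊆ [0, n−m]` with mismatch information, and `D` (length `c`) an injective
listing of all characters appearing in the mismatch information.  Let
`P^#, T^#` be the `S`-cores of `P` and `T` (each black component of the
mismatch inference graph `𝐆_S` masked by a sentinel unique to the component).
Then the triple `(T^#, P^#, D)` is the unique solution of the system
`E(P,T,S)`, up to renaming of placeholder characters: it satisfies the
system, and every solution `(T',P',D')` over any alphabet is its image under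
a letter-to-letter morphism. -/
theorem s_cores_unique_solution_of_substring_equations {α : Type*}
    (m n c : ℕ) (hm : 0 < m) (hmn : m ≤ n) (hn : 2 * n ≤ 3 * m)
    (S : Finset ℕ) (hSsub : ∀ s ∈ S, s ≤ n - m)
    (P T D : ℕ → α)
    (hDinj : ∀ a < c, ∀ b < c, D a = D b → a = b)
    (hDall : ∀ x ∈ S, ∀ j < m, P j ≠ T (x + j) →
      (∃ a < c, D a = P j) ∧ (∃ b < c, D b = T (x + j)))
    (G : SimpleGraph (ℕ ⊕ ℕ))
    (hAdj : ∀ u v, G.Adj u v ↔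
      ∃ i j, i < m ∧ j < n ∧ (∃ s ∈ S, j = i + s) ∧
        ((u = Sum.inl i ∧ v = Sum.inr j) ∨ (u = Sum.inr j ∧ v = Sum.inl i)))
    (Black : G.ConnectedComponent → Prop)
    (hBlack : ∀ C, Black C ↔
      ∀ i j, i < m → j < n → G.Adj (Sum.inl i) (Sum.inr j) →
        G.connectedComponentMk (Sum.inl i) = C → P i = T j)
    (Psharp Tsharp : ℕ → α ⊕ G.ConnectedComponent)
    (hPb : ∀ i < m, Black (G.connectedComponentMk (Sum.inl i)) →
      Psharp i = Sum.inr (G.connectedComponentMk (Sum.inl i)))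
    (hPr : ∀ i < m, ¬ Black (G.connectedComponentMk (Sum.inl i)) →
      Psharp i = Sum.inl (P i))
    (hTb : ∀ j < n, Black (G.connectedComponentMk (Sum.inr j)) →
      Tsharp j = Sum.inr (G.connectedComponentMk (Sum.inr j)))
    (hTr : ∀ j < n, ¬ Black (G.connectedComponentMk (Sum.inr j)) →
      Tsharp j = Sum.inl (T j)) :
    SatisfiesMISystem m c P T D S Psharp Tsharp (fun a => Sum.inl (D a)) ∧
    ∀ (β : Type) (P' T' D' : ℕ → β),
      SatisfiesMISystem m c P T D S P' T' D' →
      ∃ φ : α ⊕ G.ConnectedComponent → β,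
        (∀ i < m, P' i = φ (Psharp i)) ∧
        (∀ j < n, T' j = φ (Tsharp j)) ∧
        (∀ a < c, D' a = φ (Sum.inl (D a))) := by
  classical
  constructor
  · -- the S-cores satisfy the system
    intro x hx j hj
    have hxn : x + j < n := by have := hSsub x hx; omega
    have hadj : G.Adj (Sum.inl j) (Sum.inr (x + j)) := by
      rw [hAdj]
      exact ⟨j, x + j, hj, hxn, ⟨x, hx, Nat.add_comm x j⟩, Or.inl ⟨rfl, rfl⟩⟩
    have hcomp : G.connectedComponentMk (Sum.inl j) = G.connectedComponentMk (Sum.inr (x + j)) :=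
      SimpleGraph.ConnectedComponent.sound hadj.reachable
    constructor
    · intro heq
      by_cases hb : Black (G.connectedComponentMk (Sum.inl j))
      · have hb' : Black (G.connectedComponentMk (Sum.inr (x + j))) := by
          rw [← hcomp]; exact hb
        rw [hPb j hj hb, hTb (x + j) hxn hb', hcomp]
      · have hb' : ¬ Black (G.connectedComponentMk (Sum.inr (x + j))) := by
          rw [← hcomp]; exact hb
        rw [hPr j hj hb, hTr (x + j) hxn hb', heq]
    · intro hne
      have hb : ¬ Black (G.connectedComponentMk (Sum.inl j)) := by
        intro hb
        exact hne ((hBlack _).mp hb j (x + j) hj hxn hadj rfl)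
      refine ⟨?_, ?_⟩
      · intro a _ hDa
        rw [hPr j hj hb]
        exact congrArg Sum.inl hDa.symm
      · intro b _ hDb
        have hb' : ¬ Black (G.connectedComponentMk (Sum.inr (x + j))) := by
          rw [← hcomp]; exact hb
        rw [hTr (x + j) hxn hb']
        exact congrArg Sum.inl hDb.symm
  · -- every solution is an image under a letter-to-letter morphism
    intro β P' T' D' hsol
    set ch : ℕ ⊕ ℕ → α := Sum.elim P T with hch
    set vl : ℕ ⊕ ℕ → β := Sum.elim P' T' with hvl
    set Q : ℕ ⊕ ℕ → Prop := fun v => ∃ a, a < c ∧ D a = ch v ∧ vl v = D' a with hQ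
    -- core facts about an edge (inl i) — (inr (i+s))
    have core : ∀ i s, s ∈ S → i < m →
        (ch (Sum.inl i) = ch (Sum.inr (i + s)) ∧ vl (Sum.inl i) = vl (Sum.inr (i + s))) ∨
        (Q (Sum.inl i) ∧ Q (Sum.inr (i + s))) := by
      intro i s hs him
      have h1 := hsol s hs i him
      simp only [hch, hvl, hQ, Sum.elim_inl, Sum.elim_inr, Nat.add_comm i s]
      by_cases hmt : P i = T (s + i)
      · exact Or.inl ⟨hmt, h1.1 hmt⟩
      · obtain ⟨⟨a, ha, hda⟩, ⟨b, hb, hdb⟩⟩ := hDall s hs i him hmt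
        obtain ⟨hA, hB⟩ := h1.2 hmt
        exact Or.inr ⟨⟨a, ha, hda, hA a ha hda⟩, ⟨b, hb, hdb, hB b hb hdb⟩⟩
    have edgeFact : ∀ u v, G.Adj u v →
        (ch u = ch v ∧ vl u = vl v) ∨ (Q u ∧ Q v) := by
      intro u v huv
      rw [hAdj] at huv
      obtain ⟨i, j, him, hjn, ⟨s, hs, hij⟩, hor⟩ := huv
      subst hij
      have hcore := core i s hs him
      rcases hor with ⟨hu, hv⟩ | ⟨hu, hv⟩
      · subst hu; subst hv; exact hcore
      · subst hu; subst hv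
        rcases hcore with ⟨h1, h2⟩ | ⟨h1, h2⟩
        · exact Or.inl ⟨h1.symm, h2.symm⟩
        · exact Or.inr ⟨h2, h1⟩
    -- Q propagates along walks
    have keyQ : ∀ u v : ℕ ⊕ ℕ, G.Reachable u v → Q u → Q v := by
      intro u v hr
      obtain ⟨w⟩ := hr
      induction w with
      | nil => exact id
      | cons h p ih =>
        intro hq
        rcases edgeFact _ _ h with ⟨h1, h2⟩ | ⟨h1, h2⟩
        · obtain ⟨a, ha, hda, hva⟩ := hq
          exact ih ⟨a, ha, hda.trans h1, h2.symm.trans hva⟩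
        · exact ih h2
    -- along an edge within a black component, values agree
    have blackEdge : ∀ u v, G.Adj u v → Black (G.connectedComponentMk u) → vl u = vl v := by
      intro u v huv hb
      rw [hAdj] at huv
      obtain ⟨i, j, him, hjn, ⟨s, hs, hij⟩, hor⟩ := huv
      have hadjij : G.Adj (Sum.inl i) (Sum.inr j) := by
        rw [hAdj]; exact ⟨i, j, him, hjn, ⟨s, hs, hij⟩, Or.inl ⟨rfl, rfl⟩⟩
      have hcompi : G.connectedComponentMk (Sum.inl i) = G.connectedComponentMk u := by
        rcases hor with ⟨hu, _⟩ | ⟨hu, _⟩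
        · rw [hu]
        · rw [hu]; exact SimpleGraph.ConnectedComponent.sound hadjij.reachable
      have hbi : Black (G.connectedComponentMk (Sum.inl i)) := by rw [hcompi]; exact hb
      have hPT : P i = T j := (hBlack _).mp hbi i j him hjn hadjij rfl
      have hmatch : vl (Sum.inl i) = vl (Sum.inr j) := by
        subst hij
        have h1 := (hsol s hs i him).1
        rw [Nat.add_comm s i] at h1
        exact h1 hPT
      rcases hor with ⟨hu, hv⟩ | ⟨hu, hv⟩
      · rw [hu, hv]; exact hmatch
      · rw [hu, hv]; exact hmatch.symm
    -- values are constant on black components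
    have keyVal : ∀ u v : ℕ ⊕ ℕ, G.Reachable u v →
        Black (G.connectedComponentMk u) → vl u = vl v := by
      intro u v hr
      obtain ⟨w⟩ := hr
      induction w with
      | nil => intro _; rfl
      | @cons u w' v h p ih =>
        intro hb
        have hb' : Black (G.connectedComponentMk w') := by
          rw [← SimpleGraph.ConnectedComponent.sound h.reachable]; exact hb
        exact (blackEdge u w' h hb).trans (ih hb')
    -- every vertex of a non-black component satisfies Q
    have redQ : ∀ v : ℕ ⊕ ℕ, ¬ Black (G.connectedComponentMk v) → Q v := by
      intro v hb
      rw [hBlack] at hb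
      push_neg at hb
      obtain ⟨i, j, him, hjn, hadj, hcomp, hne⟩ := hb
      rw [hAdj] at hadj
      obtain ⟨i', j', _, _, ⟨s, hs, hij⟩, hor⟩ := hadj
      have hii : i = i' ∧ j = j' := by
        rcases hor with ⟨h1, h2⟩ | ⟨h1, h2⟩
        · exact ⟨Sum.inl.inj h1, Sum.inr.inj h2⟩
        · exact absurd h1 (by simp)
      obtain ⟨hi1, hj1⟩ := hii
      subst hi1; subst hj1; subst hij
      have hne2 : P i ≠ T (s + i) := by rw [Nat.add_comm s i]; exact hne
      obtain ⟨⟨a, ha, hda⟩, _⟩ := hDall s hs i him hne2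
      have hA := ((hsol s hs i him).2 hne2).1 a ha hda
      have hQi : Q (Sum.inl i) := ⟨a, ha, hda, hA⟩
      exact keyQ _ _ (SimpleGraph.ConnectedComponent.exact hcomp) hQi
    -- the morphism
    refine ⟨Sum.elim
      (fun γ => if h : ∃ a, a < c ∧ D a = γ then D' h.choose else P' 0)
      (fun C => vl C.out), ?_, ?_, ?_⟩
    case _ =>
      intro i him
      by_cases hb : Black (G.connectedComponentMk (Sum.inl i))
      · rw [hPb i him hb]
        have hout : G.connectedComponentMk ((G.connectedComponentMk (Sum.inl i)).out)
            = G.connectedComponentMk (Sum.inl i) := Quot.out_eq _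
        have hr : G.Reachable (Sum.inl i) (G.connectedComponentMk (Sum.inl i)).out :=
          SimpleGraph.ConnectedComponent.exact hout.symm
        exact keyVal _ _ hr hb
      · rw [hPr i him hb]
        obtain ⟨a, ha, hda, hva⟩ := redQ (Sum.inl i) hb
        simp only [Sum.elim_inl]
        have hex : ∃ a', a' < c ∧ D a' = P i := ⟨a, ha, hda⟩
        rw [dif_pos hex]
        have hspec := hex.choose_spec
        rw [hDinj _ hspec.1 a ha (hspec.2.trans hda.symm)]
        exact hva
    case _ =>
      intro j hjn
      by_cases hb : Black (G.connectedComponentMk (Sum.inr j))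
      · rw [hTb j hjn hb]
        have hout : G.connectedComponentMk ((G.connectedComponentMk (Sum.inr j)).out)
            = G.connectedComponentMk (Sum.inr j) := Quot.out_eq _
        have hr : G.Reachable (Sum.inr j) (G.connectedComponentMk (Sum.inr j)).out :=
          SimpleGraph.ConnectedComponent.exact hout.symm
        exact keyVal _ _ hr hb
      · rw [hTr j hjn hb]
        obtain ⟨a, ha, hda, hva⟩ := redQ (Sum.inr j) hb
        simp only [Sum.elim_inl]
        have hex : ∃ a', a' < c ∧ D a' = T j := ⟨a, ha, hda⟩
        rw [dif_pos hex]
        have hspec := hex.choose_spec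
        rw [hDinj _ hspec.1 a ha (hspec.2.trans hda.symm)]
        exact hva
    case _ =>
      intro a ha
      simp only [Sum.elim_inl]
      have hex : ∃ a', a' < c ∧ D a' = D a := ⟨a, ha, rfl⟩
      rw [dif_pos hex]
      have hspec := hex.choose_spec
      rw [hDinj _ hspec.1 a ha hspec.2]
end

section
/- Let α_k satisfy the recurrences α_{k+1}⁺ ≥ α_k⁺ · 3·(1 − (4/3)sin²θ_k)·√(1 − 2^{−(k+5)}) and α_{k+1}⁻ ≤ α_k⁻ · 3 · 2^{−(k+5)/2}, where sin²θ_k = (α_k⁺)² + (α_k⁽~⁾)² + (α_k⁻)². Assume Σ_{k=1}^{m} ((α_k⁺)² + (α_k⁽~⁾)²) ≤ 1/40 and (α_1⁻)² ≤ 1/5. Then by induction (α_k⁻)² ≤ (1/5)·(3/8)^{k−1} and sin²θ_k ≤ 9/40 < 3/4 for all k ∈ [1,m], and consequently α_m⁺ > α_1⁺ · 3^{m−1}/2. In particular, if (α_1⁺)² ≥ 9/(10n) and m = ⌈log₉ n⌉, then (α_m⁺)² > 1/40, contradicting the assumption; hence Σ_{k=1}^{⌈log₉ n⌉} ((α_k⁺)²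 + (α_k⁽~⁾)²) > 1/40 whenever (α_1⁺)² ≥ 9/(10n). -/
/-!
Squaring the recurrence for `α⁻` gives `(α_{k+1}⁻)² ≤ (9/64)(α_k⁻)²`, so `(α_k⁻)²` decays
geometrically from `1/5`. Under the budget `Σ ((α_k⁺)² + (α_k^~)²) ≤ 1/40` this gives
`sin²θ_k ≤ 9/40`, and the per-step losses `(4/3) sin²θ_k + 2^{-(k+5)}` add up to at most
`189/550 + 1/32 < 1/2`. Each step multiplies `α⁺` by at least `3(1 - loss_k)`, so the
Weierstrass product inequality `∏ (1 - x_k) ≥ 1 - Σ x_k` yields `α_m⁺ > α_1⁺ 3^{m-1}/2`.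
As `n ≤ 9^m`, squaring this beats the budget as soon as `(α_1⁺)² ≥ 9/(10n)`.
-/

open Finset

theorem Finset.one_sub_sum_le_prod_one_sub {ι R : Type*} [CommRing R] [LinearOrder R]
    [IsStrictOrderedRing R] (s : Finset ι) {f : ι → R} (h0 : ∀ i ∈ s, 0 ≤ f i)
    (h1 : ∀ i ∈ s, f i ≤ 1) : 1 - ∑ i ∈ s, f i ≤ ∏ i ∈ s, (1 - f i) := by
  classical
  induction s using Finset.induction_on with
  | empty => simp
  | insert a s ha ih =>
    simp only [mem_insert, forall_eq_or_imp] at h0 h1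
    rw [sum_insert ha, prod_insert ha]
    have hsum : 0 ≤ ∑ i ∈ s, f i := sum_nonneg h0.2
    have hprod := ih h0.2 h1.2
    nlinarith [mul_le_mul_of_nonneg_left hprod (sub_nonneg.2 h1.1), mul_nonneg h0.1 hsum]

theorem mul_prod_Ico_le_of_forall_mul_le_succ {R : Type*} [CommSemiring R] [PartialOrder R]
    [IsOrderedRing R] {a b : ℕ → R} {i j : ℕ} (hij : i ≤ j)
    (hb : ∀ k ∈ Ico i j, 0 ≤ b k) (h : ∀ k ∈ Ico i j, b k * a k ≤ a (k + 1)) :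
    a i * ∏ k ∈ Ico i j, b k ≤ a j := by
  induction j, hij using Nat.le_induction with
  | base => simp
  | succ j hij ih =>
    have hj : j ∈ Ico i (j + 1) := mem_Ico.2 ⟨hij, j.lt_succ_self⟩
    have hsub : Ico i j ⊆ Ico i (j + 1) := Ico_subset_Ico_right j.le_succ
    rw [prod_Ico_succ_top hij, ← mul_assoc]
    calc (a i * ∏ k ∈ Ico i j, b k) * b j
        ≤ a j * b j := mul_le_mul_of_nonneg_right
          (ih (fun k hk => hb k (hsub hk)) (fun k hk => h k (hsub hk))) (hb j hj)
      _ = b j * a j := mul_comm _ _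
      _ ≤ a (j + 1) := h j hj

theorem one_sub_add_le_mul_sqrt_one_sub {x d : ℝ} (hx : 0 ≤ x) (hd : 0 ≤ d) :
    1 - (x + d) ≤ (1 - x) * √(1 - d) := by
  rcases le_total x 1 with hx₁ | hx₁
  · have : 1 - d ≤ √(1 - d) := Real.le_sqrt_self_iff.2 (by linarith)
    nlinarith [mul_le_mul_of_nonneg_left this (sub_nonneg.2 hx₁), mul_nonneg hx hd]
  · nlinarith [Real.sqrt_nonneg (1 - d), Real.sqrt_le_one.2 (by linarith : 1 - d ≤ 1)]

theorem Real.natCast_le_pow_natCeil_logb {b : ℕ} (hb : 1 < b) (n : ℕ) :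
    (n : ℝ) ≤ (b : ℝ) ^ ⌈Real.logb b n⌉₊ := by
  rw [Real.natCeil_logb_natCast]
  exact_mod_cast Nat.le_pow_clog hb n

noncomputable def amplitudeLoss (s : ℕ → ℝ) (k : ℕ) : ℝ := 4 / 3 * s k + (1 / 2) ^ (k + 5)

theorem sum_Ico_one_pow_sub_one_le {r : ℝ} (hr₀ : 0 ≤ r) (hr₁ : r < 1) (m : ℕ) :
    ∑ k ∈ Ico 1 m, r ^ (k - 1) ≤ (1 - r)⁻¹ := by
  rw [sum_Ico_eq_sum_range, range_eq_Ico]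
  simpa only [add_tsub_cancel_left, pow_zero, one_div] using
    geom_sum_Ico_le_of_lt_one (m := 0) (n := m - 1) hr₀ hr₁

theorem sum_Ico_one_half_pow_add_five_le (m : ℕ) :
    ∑ k ∈ Ico 1 m, (1 / 2 : ℝ) ^ (k + 5) ≤ 1 / 32 := by
  simp_rw [pow_add, ← sum_mul]
  have := geom_sum_Ico_le_of_lt_one (x := (1 / 2 : ℝ)) (m := 1) (n := m) (by norm_num) (by norm_num)
  nlinarith

section Amplitudes

variable {αp αs αm s : ℕ → ℝ}

theorem sq_le_geom_of_amplitude_rec (hαm : ∀ k, 0 ≤ αm k)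
    (hrec2 : ∀ k, 1 ≤ k → αm (k + 1) ≤ αm k * 3 * √((1 / 2) ^ (k + 5)))
    (hαm1 : αm 1 ^ 2 ≤ 1 / 5) {k : ℕ} (hk : 1 ≤ k) :
    αm k ^ 2 ≤ 1 / 5 * (9 / 64) ^ (k - 1) := by
  have step (j : ℕ) : αm (j + 1 + 1) ^ 2 ≤ 9 / 64 * αm (j + 1) ^ 2 :=
    calc αm (j + 1 + 1) ^ 2 ≤ (αm (j + 1) * 3 * √((1 / 2) ^ (j + 1 + 5))) ^ 2 :=
          pow_le_pow_left₀ (hαm _) (hrec2 _ j.succ_pos) 2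
      _ = 9 * (1 / 2) ^ (j + 6) * αm (j + 1) ^ 2 := by
          rw [mul_pow, mul_pow, Real.sq_sqrt (by positivity)]; ring
      _ ≤ 9 * (1 / 2) ^ 6 * αm (j + 1) ^ 2 := by
          have : (1 / 2 : ℝ) ^ (j + 6) ≤ (1 / 2) ^ 6 :=
            pow_le_pow_of_le_one (by norm_num) (by norm_num) (by omega)
          gcongr
      _ = 9 / 64 * αm (j + 1) ^ 2 := by norm_num
  obtain ⟨k, rfl⟩ := Nat.exists_eq_add_of_le' hk
  calc αm (k + 1) ^ 2 ≤ (9 / 64) ^ k * αm 1 ^ 2 :=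
        le_geom (u := fun j => αm (j + 1) ^ 2) (by norm_num) k fun j _ => step j
    _ ≤ 1 / 5 * (9 / 64) ^ (k + 1 - 1) := by
        rw [Nat.add_sub_cancel, mul_comm]; gcongr

variable (hs : ∀ k, s k = αp k ^ 2 + αs k ^ 2 + αm k ^ 2) (hαm : ∀ k, 0 ≤ αm k)
  (hrec2 : ∀ k, 1 ≤ k → αm (k + 1) ≤ αm k * 3 * √((1 / 2) ^ (k + 5)))
  (hαm1 : αm 1 ^ 2 ≤ 1 / 5) {m : ℕ}
  (hsum : ∑ k ∈ Icc 1 m, (αp k ^ 2 + αs k ^ 2) ≤ 1 / 40)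
include hs hαm hrec2 hαm1 hsum

theorem s_le_of_sum_le {k : ℕ} (hk : k ∈ Icc 1 m) : s k ≤ 9 / 40 := by
  have hterm : αp k ^ 2 + αs k ^ 2 ≤ 1 / 40 :=
    (single_le_sum (fun i _ => by positivity) hk).trans hsum
  have hαmk : αm k ^ 2 ≤ 1 / 5 :=
    (sq_le_geom_of_amplitude_rec hαm hrec2 hαm1 (mem_Icc.1 hk).1).trans
      (mul_le_of_le_one_right (by norm_num) (pow_le_one₀ (by norm_num) (by norm_num)))
  rw [hs]
  linarith

theorem sum_amplitudeLoss_lt_half : ∑ k ∈ Ico 1 m, amplitudeLoss s k < 1 / 2 := by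
  have hplus : ∑ k ∈ Ico 1 m, (αp k ^ 2 + αs k ^ 2) ≤ 1 / 40 :=
    (sum_le_sum_of_subset_of_nonneg Ico_subset_Icc_self fun i _ _ => by positivity).trans hsum
  have hminus : ∑ k ∈ Ico 1 m, αm k ^ 2 ≤ 64 / 275 :=
    calc ∑ k ∈ Ico 1 m, αm k ^ 2 ≤ ∑ k ∈ Ico 1 m, 1 / 5 * (9 / 64 : ℝ) ^ (k - 1) :=
          sum_le_sum fun k hk => sq_le_geom_of_amplitude_rec hαm hrec2 hαm1 (mem_Ico.1 hk).1
      _ ≤ 1 / 5 * (1 - 9 / 64)⁻¹ := by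
          rw [← mul_sum]; gcongr; exact sum_Ico_one_pow_sub_one_le (by norm_num) (by norm_num) m
      _ = 64 / 275 := by norm_num
  have hsum_s : ∑ k ∈ Ico 1 m, s k =
      ∑ k ∈ Ico 1 m, (αp k ^ 2 + αs k ^ 2) + ∑ k ∈ Ico 1 m, αm k ^ 2 := by
    rw [← sum_add_distrib]; exact sum_congr rfl fun k _ => hs k
  simp only [amplitudeLoss, sum_add_distrib, ← mul_sum]
  linarith [sum_Ico_one_half_pow_add_five_le m]

theorem lt_amplitude_of_sum_le (hαp : ∀ k, 0 ≤ αp k)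
    (hrec1 : ∀ k, 1 ≤ k →
      αp k * (3 * (1 - (4 / 3) * s k)) * √(1 - (1 / 2) ^ (k + 5)) ≤ αp (k + 1))
    (hm : 1 ≤ m) (hp1 : 0 < αp 1) : αp 1 * 3 ^ (m - 1) / 2 < αp m := by
  have hloss_sum := sum_amplitudeLoss_lt_half hs hαm hrec2 hαm1 hsum
  have hloss₀ (k : ℕ) : 0 ≤ amplitudeLoss s k := by
    rw [amplitudeLoss, hs]; positivity
  have hloss₁ (k) (hk : k ∈ Ico 1 m) : amplitudeLoss s k ≤ 1 :=
    (single_le_sum (fun i _ => hloss₀ i) hk).trans (by linarith)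
  have hstep (k) (hk : k ∈ Ico 1 m) : 3 * (1 - amplitudeLoss s k) * αp k ≤ αp (k + 1) := by
    have hfac := one_sub_add_le_mul_sqrt_one_sub (x := 4 / 3 * s k) (d := (1 / 2) ^ (k + 5))
      (by rw [hs]; positivity) (by positivity)
    calc 3 * (1 - amplitudeLoss s k) * αp k
        ≤ αp k * (3 * ((1 - 4 / 3 * s k) * √(1 - (1 / 2) ^ (k + 5)))) := by
          rw [amplitudeLoss, mul_comm]; gcongr; exact hαp k
      _ = αp k * (3 * (1 - 4 / 3 * s k)) * √(1 - (1 / 2) ^ (k + 5)) := by ring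
      _ ≤ αp (k + 1) := hrec1 k (mem_Ico.1 hk).1
  have hprod := mul_prod_Ico_le_of_forall_mul_le_succ hm
    (fun k hk => by linarith [hloss₁ k hk]) hstep
  rw [prod_mul_distrib, prod_const, Nat.card_Ico] at hprod
  have hW := one_sub_sum_le_prod_one_sub (Ico 1 m) (fun k _ => hloss₀ k) hloss₁
  have hpos : 0 < αp 1 * 3 ^ (m - 1) := by positivity
  calc αp 1 * 3 ^ (m - 1) / 2 < αp 1 * 3 ^ (m - 1) * (1 - ∑ k ∈ Ico 1 m, amplitudeLoss s k) := by
        nlinarith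
    _ ≤ αp 1 * 3 ^ (m - 1) * ∏ k ∈ Ico 1 m, (1 - amplitudeLoss s k) := by gcongr
    _ = αp 1 * (3 ^ (m - 1) * ∏ k ∈ Ico 1 m, (1 - amplitudeLoss s k)) := by ring
    _ ≤ αp m := hprod

end Amplitudes

theorem one_div_forty_lt_sq_of_mul_pow_lt {a b x : ℝ} {m : ℕ} (hm : 1 ≤ m) (hx : 0 < x)
    (hxm : x ≤ 9 ^ m) (ha : 9 / (10 * x) ≤ a ^ 2) (hab : a * 3 ^ (m - 1) / 2 < b)
    (ha₀ : 0 ≤ a) : 1 / 40 < b ^ 2 := by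
  obtain ⟨m, rfl⟩ := Nat.exists_eq_add_of_le' hm
  rw [Nat.add_sub_cancel] at hab
  have h9 : (9 : ℝ) ^ (m + 1) = 9 * ((3 : ℝ) ^ m) ^ 2 := by
    rw [← pow_mul, pow_succ, mul_comm, mul_comm m, pow_mul]; norm_num
  have hsq : (a * 3 ^ m / 2) ^ 2 < b ^ 2 := pow_lt_pow_left₀ hab (by positivity) two_ne_zero
  have hax : 9 ≤ 10 * x * a ^ 2 := by rwa [div_le_iff₀ (by positivity), mul_comm] at ha
  nlinarith [pow_pos (three_pos (α := ℝ)) m]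

theorem amplitude_amplification_invariant_general
    (n m : ℕ) (hn : 2 ≤ n) (hm : m = ⌈Real.logb 9 n⌉₊)
    (αp αs αm : ℕ → ℝ)
    (hαp : ∀ k, 0 ≤ αp k) (hαm : ∀ k, 0 ≤ αm k)
    (s : ℕ → ℝ)
    (hs : ∀ k, s k = (αp k) ^ 2 + (αs k) ^ 2 + (αm k) ^ 2)
    (hrec1 : ∀ k, 1 ≤ k →
      αp k * (3 * (1 - (4 / 3) * s k)) * Real.sqrt (1 - (1 / 2) ^ (k + 5)) ≤
        αp (k + 1))
    (hrec2 : ∀ k, 1 ≤ k →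
      αm (k + 1) ≤ αm k * 3 * Real.sqrt ((1 / 2) ^ (k + 5)))
    (hαm1 : (αm 1) ^ 2 ≤ 1 / 5) :
    ((∑ k ∈ Finset.Icc 1 m, ((αp k) ^ 2 + (αs k) ^ 2)) ≤ 1 / 40 →
      (∀ k, 1 ≤ k → k ≤ m →
        (αm k) ^ 2 ≤ (1 / 5) * (3 / 8) ^ (k - 1) ∧ s k ≤ 9 / 40) ∧
      (0 < αp 1 → αp 1 * 3 ^ (m - 1) / 2 < αp m)) ∧
    (9 / (10 * n) ≤ (αp 1) ^ 2 →
      1 / 40 < ∑ k ∈ Finset.Icc 1 m, ((αp k) ^ 2 + (αs k) ^ 2)) := by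
  have hm₁ : 1 ≤ m := hm ▸ Nat.ceil_pos.2 (Real.logb_pos (by norm_num) (by exact_mod_cast hn))
  refine ⟨fun hsum => ⟨fun k hk₁ hkm => ⟨?_, ?_⟩, ?_⟩, fun h9 => ?_⟩
  · exact (sq_le_geom_of_amplitude_rec hαm hrec2 hαm1 hk₁).trans <|
      mul_le_mul_of_nonneg_left (pow_le_pow_left₀ (by norm_num) (by norm_num) _) (by norm_num)
  · exact s_le_of_sum_le hs hαm hrec2 hαm1 hsum (mem_Icc.2 ⟨hk₁, hkm⟩)
  · exact lt_amplitude_of_sum_le hs hαm hrec2 hαm1 hsum hαp hrec1 hm₁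
  · by_contra! hsum
    have hn₀ : (0 : ℝ) < n := by positivity
    have hp1 : 0 < αp 1 := (hαp 1).lt_of_ne' fun h => by
      rw [h] at h9; linarith [div_pos (by norm_num : (0 : ℝ) < 9) (by positivity : (0 : ℝ) < 10 * n)]
    have hn9 : (n : ℝ) ≤ 9 ^ m := by
      simpa [← hm] using Real.natCast_le_pow_natCeil_logb (b := 9) (by norm_num) n
    have hterm : αp m ^ 2 ≤ 1 / 40 := (le_add_of_nonneg_right (sq_nonneg (αs m))).trans <|
      (single_le_sum (f := fun k => αp k ^ 2 + αs k ^ 2) (fun k _ => by positivity)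
        (mem_Icc.2 ⟨hm₁, le_rfl⟩)).trans hsum
    exact hterm.not_gt <| one_div_forty_lt_sq_of_mul_pow_lt hm₁ hn₀ hn9 h9
      (lt_amplitude_of_sum_le hs hαm hrec2 hαm1 hsum hαp hrec1 hm₁ hp1) (hαp 1)

/-- **amplitude-amplification invariant.**
Let `αp, αs, αm` (the amplitudes `α_k⁺, α_k⁽~⁾, α_k⁻`) be nonnegative reals
with `s k = (α_k⁺)² + (α_k⁽~⁾)² + (α_k⁻)²` (`= sin²θ_k`) satisfying the
recurrences
`α_{k+1}⁺ ≥ α_k⁺ · 3(1 − (4/3)·s k) · √(1 − 2^{−(k+5)})` and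
`α_{k+1}⁻ ≤ α_k⁻ · 3 · 2^{−(k+5)/2}`, with `(α_1⁻)² ≤ 1/5`, and let
`m = ⌈log₉ n⌉`.  If `Σ_{k=1}^{m}((α_k⁺)² + (α_k⁽~⁾)²) ≤ 1/40`, then by
induction `(α_k⁻)² ≤ (1/5)(3/8)^{k−1}` and `s k ≤ 9/40 < 3/4` for
`k ∈ [1,m]`, and consequently `α_m⁺ > α_1⁺·3^{m−1}/2` (when `α_1⁺ > 0`).
In particular, if `(α_1⁺)² ≥ 9/(10n)`, this yields a contradiction; hence
`Σ_{k=1}^{⌈log₉ n⌉}((α_k⁺)² + (α_k⁽~⁾)²) > 1/40` whenever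
`(α_1⁺)² ≥ 9/(10n)`. -/
theorem amplitude_amplification_invariant
    (n m : ℕ) (hn : 2 ≤ n) (hm : m = ⌈Real.logb 9 n⌉₊)
    (αp αs αm : ℕ → ℝ)
    (hαp : ∀ k, 0 ≤ αp k) (hαs : ∀ k, 0 ≤ αs k) (hαm : ∀ k, 0 ≤ αm k)
    (s : ℕ → ℝ)
    (hs : ∀ k, s k = (αp k) ^ 2 + (αs k) ^ 2 + (αm k) ^ 2)
    (hrec1 : ∀ k, 1 ≤ k →
      αp k * (3 * (1 - (4 / 3) * s k)) * Real.sqrt (1 - (1 / 2) ^ (k + 5)) ≤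
        αp (k + 1))
    (hrec2 : ∀ k, 1 ≤ k →
      αm (k + 1) ≤ αm k * 3 * Real.sqrt ((1 / 2) ^ (k + 5)))
    (hαm1 : (αm 1) ^ 2 ≤ 1 / 5) :
    ((∑ k ∈ Finset.Icc 1 m, ((αp k) ^ 2 + (αs k) ^ 2)) ≤ 1 / 40 →
      (∀ k, 1 ≤ k → k ≤ m →
        (αm k) ^ 2 ≤ (1 / 5) * (3 / 8) ^ (k - 1) ∧ s k ≤ 9 / 40) ∧
      (0 < αp 1 → αp 1 * 3 ^ (m - 1) / 2 < αp m)) ∧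
    (9 / (10 * n) ≤ (αp 1) ^ 2 →
      1 / 40 < ∑ k ∈ Finset.Icc 1 m, ((αp k) ^ 2 + (αs k) ^ 2)) :=
  amplitude_amplification_invariant_general n m hn hm αp αs αm hαp hαm s hs hrec1 hrec2 hαm1
end
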